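/- arXiv:1301.2746 — 11 statements merged into one kernel-verified Lean document; each statement's English description precedes it below -/
import Mathlib

section
/- Let f ∈ TH(Φ_i,Ψ_j;α), and set σ_n = p_n - αu_n (n≥2) and Γ_n = q_n - (-1)^{j-i}αv_n (n≥1). If (σ_n)_{n≥2} and (Γ_n)_{n≥1} are non-decreasing, then for all z in the unit disk, |f(z)| ≤ (1+B_1)|z| + ((1-α)/η)(1 - Γ_1 B_1/(1-α))|z|^2 and |f(z)| ≥ (1-B_1)|z| - ((1-α)/η)(1 - Γ_1 B_1/(1-α))|z|^2, where η = min{σ_2, Γ_2} and B_1 = f_{z̄}(0). -/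
open Complex

set_option maxHeartbeats 1000000 in
/-- Growth theorem for `TH(Φ_i, Ψ_j; α)`: if `σ_n = p_n - α u_n` and
`Γ_n = q_n - ε α v_n` (`ε = (-1)^{j-i}`) are non-decreasing, then with
`η = min{σ_2, Γ_2}` one has the two-sided growth bound for
`f(z) = z - Σ_{n≥2} A_n z^n + conj(Σ_{n≥1} B_n z^n)`. -/
theorem TH_growth
    (α ε : ℝ) (hα : 0 ≤ α) (hα1 : α < 1) (hε : ε = 1 ∨ ε = -1)
    (p u q v A B : ℕ → ℝ)
    (hpu : ∀ n, 2 ≤ n → 0 ≤ u n ∧ u n < p n)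
    (hqv : ∀ n, 1 ≤ n → 0 ≤ v n ∧ v n < q n)
    (hA : ∀ n, 2 ≤ n → 0 ≤ A n) (hB : ∀ n, 1 ≤ n → 0 ≤ B n)
    (hSA : Summable fun n : ℕ => (p (n + 2) - α * u (n + 2)) / (1 - α) * A (n + 2))
    (hSB : Summable fun n : ℕ => (q (n + 1) - ε * α * v (n + 1)) / (1 - α) * B (n + 1))
    (hsum : (∑' n : ℕ, (p (n + 2) - α * u (n + 2)) / (1 - α) * A (n + 2))
        + (∑' n : ℕ, (q (n + 1) - ε * α * v (n + 1)) / (1 - α) * B (n + 1)) ≤ 1)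
    (hσ : ∀ n, 2 ≤ n → p n - α * u n ≤ p (n + 1) - α * u (n + 1))
    (hΓ : ∀ n, 1 ≤ n → q n - ε * α * v n ≤ q (n + 1) - ε * α * v (n + 1)) :
    ∀ z : ℂ, ‖z‖ < 1 →
      ‖(z - ∑' n : ℕ, (A (n + 2) : ℂ) * z ^ (n + 2)
          + starRingEnd ℂ (∑' n : ℕ, (B (n + 1) : ℂ) * z ^ (n + 1)))‖
        ≤ (1 + B 1) * ‖z‖ + (1 - α) / min (p 2 - α * u 2) (q 2 - ε * α * v 2)
            * (1 - (q 1 - ε * α * v 1) / (1 - α) * B 1) * ‖z‖ ^ 2 ∧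
      (1 - B 1) * ‖z‖ - (1 - α) / min (p 2 - α * u 2) (q 2 - ε * α * v 2)
            * (1 - (q 1 - ε * α * v 1) / (1 - α) * B 1) * ‖z‖ ^ 2
        ≤ ‖(z - ∑' n : ℕ, (A (n + 2) : ℂ) * z ^ (n + 2)
          + starRingEnd ℂ (∑' n : ℕ, (B (n + 1) : ℂ) * z ^ (n + 1)))‖ := by
  intro z hz
  have h1α : (0:ℝ) < 1 - α := by linarith
  have hzn : (0:ℝ) ≤ ‖z‖ := norm_nonneg z
  have hσpos : ∀ n, 2 ≤ n → 0 < p n - α * u n := by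
    intro n hn; have h := hpu n hn; nlinarith [h.1, h.2]
  have hΓpos : ∀ n, 1 ≤ n → 0 < q n - ε * α * v n := by
    intro n hn; have h := hqv n hn
    rcases hε with h1 | h1 <;> rw [h1] <;> nlinarith [h.1, h.2]
  have hσm : ∀ n : ℕ, p 2 - α * u 2 ≤ p (n+2) - α * u (n+2) := by
    intro n; induction n with
    | zero => exact le_refl _
    | succ k ih => exact le_trans ih (hσ (k+2) (by omega))
  have hΓm2 : ∀ n : ℕ, q 2 - ε * α * v 2 ≤ q (n+2) - ε * α * v (n+2) := by
    intro n; induction n with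
    | zero => exact le_refl _
    | succ k ih => exact le_trans ih (hΓ (k+2) (by omega))
  have hΓm1 : ∀ n : ℕ, q 1 - ε * α * v 1 ≤ q (n+1) - ε * α * v (n+1) := by
    intro n; induction n with
    | zero => exact le_refl _
    | succ k ih => exact le_trans ih (hΓ (k+1) (by omega))
  set η := min (p 2 - α * u 2) (q 2 - ε * α * v 2) with hηdef
  have hηpos : 0 < η := lt_min (hσpos 2 le_rfl) (hΓpos 2 (by omega))
  have hΓ1pos : 0 < q 1 - ε * α * v 1 := hΓpos 1 le_rfl
  have hB1 : 0 ≤ B 1 := hB 1 le_rfl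
  -- summability of coefficient tails
  have hSA' : Summable (fun n : ℕ => A (n+2)) := by
    apply Summable.of_nonneg_of_le (fun n => hA (n+2) (by omega))
      (fun n => ?_) (hSA.mul_right ((1-α)/η))
    have hσ2 : η ≤ p (n+2) - α * u (n+2) := le_trans (min_le_left _ _) (hσm n)
    have hAn := hA (n+2) (by omega)
    have heq : (p (n+2) - α * u (n+2)) / (1 - α) * A (n+2) * ((1-α)/η)
        = (p (n+2) - α * u (n+2)) * A (n+2) / η := by
      field_simp
    rw [heq, le_div_iff₀ hηpos]
    nlinarith
  have hSB' : Summable (fun n : ℕ => B (n+1)) := by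
    apply Summable.of_nonneg_of_le (fun n => hB (n+1) (by omega))
      (fun n => ?_) (hSB.mul_right ((1-α)/(q 1 - ε * α * v 1)))
    have hΓn : q 1 - ε * α * v 1 ≤ q (n+1) - ε * α * v (n+1) := hΓm1 n
    have hBn := hB (n+1) (by omega)
    have heq : (q (n+1) - ε * α * v (n+1)) / (1 - α) * B (n+1) * ((1-α)/(q 1 - ε * α * v 1))
        = (q (n+1) - ε * α * v (n+1)) * B (n+1) / (q 1 - ε * α * v 1) := by
      field_simp
    rw [heq, le_div_iff₀ hΓ1pos]
    nlinarith
  have hSB'' : Summable (fun n : ℕ => B (n+2)) := (summable_nat_add_iff 1).mpr hSB'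
  have hTB : Summable (fun n : ℕ => (q (n + 2) - ε * α * v (n + 2)) / (1 - α) * B (n + 2)) :=
    (summable_nat_add_iff 1).mpr hSB
  set SA := ∑' n : ℕ, A (n+2) with hSAdef
  set SB := ∑' n : ℕ, B (n+2) with hSBdef
  -- split off first term of the B-sum
  have hsplit : (∑' n : ℕ, (q (n+1) - ε * α * v (n+1)) / (1 - α) * B (n+1))
      = (q 1 - ε * α * v 1) / (1 - α) * B 1
        + ∑' n : ℕ, (q (n+2) - ε * α * v (n+2)) / (1 - α) * B (n+2) :=
    Summable.tsum_eq_zero_add hSB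
  -- coefficient bound
  have hA2 : (η/(1-α)) * SA ≤ ∑' n : ℕ, (p (n+2) - α * u (n+2)) / (1-α) * A (n+2) := by
    rw [hSAdef, ← tsum_mul_left]
    refine Summable.tsum_le_tsum (fun n => ?_) (hSA'.mul_left _) hSA
    have hσ2 : η ≤ p (n+2) - α * u (n+2) := le_trans (min_le_left _ _) (hσm n)
    have hAn := hA (n+2) (by omega)
    gcongr
  have hB2 : (η/(1-α)) * SB ≤ ∑' n : ℕ, (q (n+2) - ε * α * v (n+2)) / (1-α) * B (n+2) := by
    rw [hSBdef, ← tsum_mul_left]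
    refine Summable.tsum_le_tsum (fun n => ?_) (hSB''.mul_left _) hTB
    have hΓ2 : η ≤ q (n+2) - ε * α * v (n+2) := le_trans (min_le_right _ _) (hΓm2 n)
    have hBn := hB (n+2) (by omega)
    gcongr
  have hmain : (η/(1-α)) * (SA + SB) ≤ 1 - (q 1 - ε * α * v 1)/(1-α) * B 1 := by
    rw [mul_add]
    rw [hsplit] at hsum
    linarith
  have hK : SA + SB ≤ (1-α)/η * (1 - (q 1 - ε * α * v 1)/(1-α) * B 1) := by
    have h2 : (1-α)/η * (1 - (q 1 - ε * α * v 1)/(1-α) * B 1)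
        = (1 - (q 1 - ε * α * v 1)/(1-α) * B 1) / (η/(1-α)) := by
      rw [div_div_eq_mul_div]; ring
    rw [h2]
    exact (le_div_iff₀' (by positivity)).mpr hmain
  -- complex norm estimates
  have hnormA : ∀ n : ℕ, ‖(A (n+2) : ℂ) * z^(n+2)‖ = A (n+2) * ‖z‖^(n+2) := by
    intro n
    rw [norm_mul, norm_pow, Complex.norm_real, Real.norm_of_nonneg (hA (n+2) (by omega))]
  have hnormB : ∀ n : ℕ, ‖(B (n+1) : ℂ) * z^(n+1)‖ = B (n+1) * ‖z‖^(n+1) := by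
    intro n
    rw [norm_mul, norm_pow, Complex.norm_real, Real.norm_of_nonneg (hB (n+1) (by omega))]
  have hz1 : ∀ k : ℕ, ‖z‖^(k+2) ≤ ‖z‖^2 := fun k =>
    pow_le_pow_of_le_one hzn hz.le (by omega)
  have hSAcn : Summable (fun n : ℕ => ‖(A (n+2) : ℂ) * z^(n+2)‖) := by
    refine Summable.of_nonneg_of_le (fun n => norm_nonneg _) (fun n => ?_) hSA'
    rw [hnormA n]
    have := hA (n+2) (by omega)
    calc A (n+2) * ‖z‖^(n+2) ≤ A (n+2) * 1 := by
          exact mul_le_mul_of_nonneg_left (pow_le_one₀ hzn hz.le) this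
      _ = A (n+2) := mul_one _
  have hSAc : Summable (fun n : ℕ => (A (n+2) : ℂ) * z^(n+2)) := hSAcn.of_norm
  have hSBcn1 : Summable (fun n : ℕ => ‖(B (n+1) : ℂ) * z^(n+1)‖) := by
    refine Summable.of_nonneg_of_le (fun n => norm_nonneg _) (fun n => ?_) hSB'
    rw [hnormB n]
    have := hB (n+1) (by omega)
    calc B (n+1) * ‖z‖^(n+1) ≤ B (n+1) * 1 := by
          exact mul_le_mul_of_nonneg_left (pow_le_one₀ hzn hz.le) this
      _ = B (n+1) := mul_one _
  have hSBc1 : Summable (fun n : ℕ => (B (n+1) : ℂ) * z^(n+1)) := hSBcn1.of_norm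
  have hSBcn2 : Summable (fun n : ℕ => ‖(B (n+2) : ℂ) * z^(n+2)‖) :=
    (summable_nat_add_iff 1).mpr hSBcn1
  have hSBc2 : Summable (fun n : ℕ => (B (n+2) : ℂ) * z^(n+2)) := hSBcn2.of_norm
  set X := ∑' n : ℕ, (A (n+2) : ℂ) * z^(n+2) with hXdef
  set Y2 := ∑' n : ℕ, (B (n+2) : ℂ) * z^(n+2) with hY2def
  have hBsplit : (∑' n : ℕ, (B (n+1) : ℂ) * z^(n+1)) = (B 1 : ℂ) * z + Y2 := by
    have h := Summable.tsum_eq_zero_add hSBc1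
    simpa using h
  have hXb : ‖X‖ ≤ SA * ‖z‖^2 := by
    calc ‖X‖ ≤ ∑' n : ℕ, ‖(A (n+2) : ℂ) * z^(n+2)‖ := norm_tsum_le_tsum_norm hSAcn
      _ ≤ ∑' n : ℕ, A (n+2) * ‖z‖^2 := by
          refine Summable.tsum_le_tsum (fun n => ?_) hSAcn (hSA'.mul_right _)
          rw [hnormA n]
          exact mul_le_mul_of_nonneg_left (hz1 n) (hA (n+2) (by omega))
      _ = SA * ‖z‖^2 := tsum_mul_right
  have hY2b : ‖Y2‖ ≤ SB * ‖z‖^2 := by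
    calc ‖Y2‖ ≤ ∑' n : ℕ, ‖(B (n+2) : ℂ) * z^(n+2)‖ := norm_tsum_le_tsum_norm hSBcn2
      _ ≤ ∑' n : ℕ, B (n+2) * ‖z‖^2 := by
          refine Summable.tsum_le_tsum (fun n => ?_) hSBcn2 (hSB''.mul_right _)
          have hn : ‖(B (n+2) : ℂ) * z^(n+2)‖ = B (n+2) * ‖z‖^(n+2) := by
            rw [norm_mul, norm_pow, Complex.norm_real,
              Real.norm_of_nonneg (hB (n+2) (by omega))]
          rw [hn]
          exact mul_le_mul_of_nonneg_left (hz1 n) (hB (n+2) (by omega))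
      _ = SB * ‖z‖^2 := tsum_mul_right
  have hB1z : ‖(B 1 : ℂ) * z‖ = B 1 * ‖z‖ := by
    rw [norm_mul, Complex.norm_real, Real.norm_of_nonneg hB1]
  have hKz : (SA + SB) * ‖z‖^2
      ≤ (1-α)/η * (1 - (q 1 - ε * α * v 1)/(1-α) * B 1) * ‖z‖^2 :=
    mul_le_mul_of_nonneg_right hK (sq_nonneg _)
  rw [hBsplit]
  have hC : ‖starRingEnd ℂ ((B 1 : ℂ) * z + Y2)‖ = ‖(B 1 : ℂ) * z + Y2‖ :=
    RCLike.norm_conj _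
  have hYb : ‖(B 1 : ℂ) * z + Y2‖ ≤ B 1 * ‖z‖ + SB * ‖z‖^2 := by
    calc ‖(B 1 : ℂ) * z + Y2‖ ≤ ‖(B 1 : ℂ) * z‖ + ‖Y2‖ := norm_add_le _ _
      _ ≤ B 1 * ‖z‖ + SB * ‖z‖^2 := by rw [hB1z]; linarith
  constructor
  · calc ‖z - X + starRingEnd ℂ ((B 1 : ℂ) * z + Y2)‖
        ≤ ‖z - X‖ + ‖starRingEnd ℂ ((B 1 : ℂ) * z + Y2)‖ := norm_add_le _ _
      _ ≤ (‖z‖ + ‖X‖) + (B 1 * ‖z‖ + SB * ‖z‖^2) := by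
          rw [hC]; exact add_le_add (norm_sub_le _ _) hYb
      _ ≤ (1 + B 1) * ‖z‖ + (1-α)/η * (1 - (q 1 - ε * α * v 1)/(1-α) * B 1) * ‖z‖^2 := by
          nlinarith [hXb, hKz]
  · have hzeq : z = (z - X + starRingEnd ℂ ((B 1 : ℂ) * z + Y2))
        + (X - starRingEnd ℂ ((B 1 : ℂ) * z + Y2)) := by ring
    have h1 : ‖z‖ ≤ ‖z - X + starRingEnd ℂ ((B 1 : ℂ) * z + Y2)‖
        + ‖X - starRingEnd ℂ ((B 1 : ℂ) * z + Y2)‖ := by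
      conv_lhs => rw [hzeq]
      exact norm_add_le _ _
    have h2 : ‖X - starRingEnd ℂ ((B 1 : ℂ) * z + Y2)‖
        ≤ ‖X‖ + (B 1 * ‖z‖ + SB * ‖z‖^2) := by
      calc ‖X - starRingEnd ℂ ((B 1 : ℂ) * z + Y2)‖
          ≤ ‖X‖ + ‖starRingEnd ℂ ((B 1 : ℂ) * z + Y2)‖ := norm_sub_le _ _
        _ ≤ ‖X‖ + (B 1 * ‖z‖ + SB * ‖z‖^2) := by rw [hC]; linarith
    nlinarith [hXb, hKz, h1, h2]
end

section
/- Under the hypotheses of the growth theorem (non-decreasing sequences σ_n = p_n - αu_n, Γ_n = q_n - (-1)^{j-i}αv_n, η = min{σ_2,Γ_2}), the image f(D) of the open unit disk under any f ∈ TH(Φ_i,Ψ_j;α) contains the open disk of radius (1/η)(η - 1 + α + (Γ_1 - η)B_1) centered at 0, where B_1 = f_{z̄}(0). -/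
/-!
By the coefficient inequality and the monotonicity of `σ_n` and `Γ_n`,
`η ∑_{n ≥ 2} A_n + Γ_1 B_1 + η ∑_{n ≥ 2} B_n ≤ 1 - α`, which says exactly that the
radius `r` of the statement is at most `1 - ∑ A_n - ∑ B_n`. For `‖w‖ < ρ (1 - ∑ A_n - ∑ B_n)`
with `ρ < 1` we get `‖f z - w - z‖ < ρ` on `‖z‖ = ρ`, and a topological Rouché argument
produces a zero of `f - w` in `‖z‖ < ρ`: a nonvanishing `G` on the closed disc has a
continuous logarithm there (the disc is simply connected and `exp` is a covering map), and
since `G z / z` stays in the right half-plane on the circle, `z` itself would get a continuous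
logarithm on the circle.
-/

open Complex Metric

theorem exists_continuous_exp_eq {A : Type*} [TopologicalSpace A] [SimplyConnectedSpace A]
    [LocallyPathConnectedSpace A] [Nonempty A] {f : A → ℂ} (hf : Continuous f)
    (h0 : ∀ a, f a ≠ 0) : ∃ L : A → ℂ, Continuous L ∧ ∀ a, exp (L a) = f a := by
  obtain ⟨a₀⟩ := ‹Nonempty A›
  obtain ⟨L, ⟨-, hL⟩, -⟩ := isCoveringMapOn_exp.existsUnique_continuousMap_lifts
    ⟨f, hf⟩ (a₀ := a₀) (exp_log (h0 a₀)) h0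
  exact ⟨L, L.continuous, congrFun hL⟩

theorem eq_add_mul_I_of_exp_eq {M : ℝ → ℂ} (hM : Continuous M) {c : ℂ}
    (h : ∀ θ : ℝ, exp (M θ) = c * exp (θ * I)) (θ : ℝ) : M θ = M 0 + θ * I := by
  have hconst := isCoveringMap_exp.const_of_comp (g := fun t : ℝ => M t - t * I)
    (by fun_prop) (fun t t' => Subtype.ext <| by simp [exp_sub, h]) θ 0
  simpa [sub_eq_iff_eq_add] using hconst

theorem exists_continuous_retraction_closedBall {r : ℝ} (hr : 0 < r) :
    ∃ R : ℂ → ℂ, Continuous R ∧ (∀ z, R z ∈ closedBall 0 r) ∧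
      ∀ z ∈ closedBall 0 r, R z = z := by
  have hmax : ∀ z : ℂ, 0 < max r ‖z‖ := fun z => lt_max_of_lt_left hr
  refine ⟨fun z => ((r / max r ‖z‖ : ℝ) : ℂ) * z,
    by fun_prop (disch := exact fun z => (hmax z).ne'), fun z => ?_, fun z hz => ?_⟩
  · rw [mem_closedBall_zero_iff, norm_mul, norm_real,
      Real.norm_of_nonneg (div_nonneg hr.le (hmax z).le), div_mul_eq_mul_div, div_le_iff₀ (hmax z)]
    exact mul_le_mul_of_nonneg_left (le_max_right _ _) hr.le
  · dsimp only
    rw [max_eq_left (mem_closedBall_zero_iff.mp hz), div_self hr.ne', ofReal_one, one_mul]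

theorem exists_mem_ball_eq_zero_of_norm_sub_lt {G : ℂ → ℂ} {r : ℝ} (hr : 0 < r)
    (hG : ContinuousOn G (closedBall 0 r)) (h : ∀ z, ‖z‖ = r → ‖G z - z‖ < r) :
    ∃ z ∈ ball (0 : ℂ) r, G z = 0 := by
  by_contra! hne
  have hne' : ∀ z ∈ closedBall (0 : ℂ) r, G z ≠ 0 := by
    intro z hz hGz
    rcases (mem_closedBall_zero_iff.mp hz).lt_or_eq with hlt | heq
    · exact hne z (mem_ball_zero_iff.mpr hlt) hGz
    · simpa [hGz, heq] using h z heq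
  obtain ⟨R, hR, hRmem, hRid⟩ := exists_continuous_retraction_closedBall hr
  obtain ⟨L, hL, hexpL⟩ := exists_continuous_exp_eq (hG.comp_continuous hR hRmem)
    fun z => hne' _ (hRmem z)
  set c : ℝ → ℂ := fun θ => r * exp (θ * I) with hc_def
  have hc_norm : ∀ θ, ‖c θ‖ = r := fun θ => by
    simp [hc_def, norm_exp_ofReal_mul_I, abs_of_pos hr]
  have hc_mem : ∀ θ, c θ ∈ closedBall 0 r := fun θ => by simp [hc_norm θ]
  have hc_ne : ∀ θ, c θ ≠ 0 := fun θ h0 => by simpa [h0, hr.ne] using hc_norm θ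
  -- On the circle `G z / z` stays in the disc of radius 1 about 1, where `log` is continuous.
  have hslit : ∀ θ, G (c θ) / c θ ∈ slitPlane := fun θ => by
    have hq : G (c θ) / c θ = 1 + (G (c θ) - c θ) / c θ := by field_simp [hc_ne θ]; ring
    rw [hq]
    refine mem_slitPlane_of_norm_lt_one ?_
    rw [norm_div, hc_norm θ, div_lt_one hr]
    exact h _ (hc_norm θ)
  set M : ℝ → ℂ := fun θ => L (c θ) - log (G (c θ) / c θ)
  have hM : Continuous M := by
    have hGc : Continuous fun θ => G (c θ) := hG.comp_continuous (by fun_prop) hc_mem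
    exact (hL.comp (by fun_prop)).sub ((hGc.div (by fun_prop) hc_ne).clog hslit)
  have hexpM : ∀ θ : ℝ, exp (M θ) = r * exp (θ * I) := fun θ => by
    have := hexpL (c θ)
    simp only [Function.comp_apply, hRid _ (hc_mem θ)] at this
    simp only [M, exp_sub, this, exp_log (div_ne_zero (hne' _ (hc_mem θ)) (hc_ne θ))]
    field_simp [hne' _ (hc_mem θ)]
    rfl
  have hper : M (2 * Real.pi) = M 0 := by
    simp [M, hc_def, exp_two_pi_mul_I]
  have := eq_add_mul_I_of_exp_eq hM hexpM (2 * Real.pi)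
  rw [hper, left_eq_add] at this
  simp [Real.pi_ne_zero] at this

section PowerSeries

variable {a : ℕ → ℝ} (ha : ∀ n, 0 ≤ a n) (hsa : Summable a) (k : ℕ)
include ha hsa

theorem continuousOn_tsum_mul_pow :
    ContinuousOn (fun z : ℂ => ∑' n, (a n : ℂ) * z ^ (n + k)) (closedBall 0 1) := by
  refine continuousOn_tsum (fun n => by fun_prop) hsa fun n z hz => ?_
  rw [norm_mul, norm_real, Real.norm_of_nonneg (ha n), norm_pow]
  exact mul_le_of_le_one_right (ha n)
    (pow_le_one₀ (norm_nonneg z) (mem_closedBall_zero_iff.mp hz))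

theorem norm_tsum_mul_pow_le (hk : k ≠ 0) {z : ℂ} (hz : ‖z‖ ≤ 1) :
    ‖∑' n, (a n : ℂ) * z ^ (n + k)‖ ≤ (∑' n, a n) * ‖z‖ := by
  refine tsum_of_norm_bounded (hsa.hasSum.mul_right ‖z‖) fun n => ?_
  rw [norm_mul, norm_real, Real.norm_of_nonneg (ha n), norm_pow]
  exact mul_le_mul_of_nonneg_left (pow_le_of_le_one (norm_nonneg z) hz (by omega)) (ha n)

end PowerSeries

theorem exists_harmonic_eq_of_norm_lt {a b : ℕ → ℝ} (ha : ∀ n, 0 ≤ a n) (hb : ∀ n, 0 ≤ b n)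
    (hsa : Summable a) (hsb : Summable b) {w : ℂ}
    (hw : ‖w‖ < 1 - (∑' n, a n) - ∑' n, b n) :
    ∃ z : ℂ, ‖z‖ < 1 ∧
      z - ∑' n, (a n : ℂ) * z ^ (n + 2) + starRingEnd ℂ (∑' n, (b n : ℂ) * z ^ (n + 1)) = w := by
  set d := 1 - (∑' n, a n) - ∑' n, b n
  have hd : 0 < d := (norm_nonneg w).trans_lt hw
  obtain ⟨ρ, hwρ, hρ1⟩ := exists_between ((div_lt_one hd).mpr hw)
  have hρ0 : 0 < ρ := (div_nonneg (norm_nonneg w) hd.le).trans_lt hwρ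
  rw [div_lt_iff₀ hd] at hwρ
  set f : ℂ → ℂ := fun z =>
    z - ∑' n, (a n : ℂ) * z ^ (n + 2) + starRingEnd ℂ (∑' n, (b n : ℂ) * z ^ (n + 1)) with hf
  have hf_cont : ContinuousOn f (closedBall 0 1) :=
    (continuousOn_id.sub (continuousOn_tsum_mul_pow ha hsa 2)).add
      (continuous_conj.comp_continuousOn (continuousOn_tsum_mul_pow hb hsb 1))
  have hf_near_id : ∀ z, ‖z‖ = ρ → ‖f z - w - z‖ < ρ := fun z hz => by
    have hz1 : ‖z‖ ≤ 1 := hz ▸ hρ1.le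
    have hA := norm_tsum_mul_pow_le ha hsa 2 two_ne_zero hz1
    have hB := norm_tsum_mul_pow_le hb hsb 1 one_ne_zero hz1
    calc ‖f z - w - z‖
        = ‖-(∑' n, (a n : ℂ) * z ^ (n + 2))
            + starRingEnd ℂ (∑' n, (b n : ℂ) * z ^ (n + 1)) - w‖ := by
          rw [hf]; ring_nf
      _ ≤ ‖∑' n, (a n : ℂ) * z ^ (n + 2)‖ + ‖∑' n, (b n : ℂ) * z ^ (n + 1)‖ + ‖w‖ := by
          refine (norm_sub_le _ _).trans (add_le_add_left ((norm_add_le _ _).trans ?_) _)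
          rw [norm_neg, RCLike.norm_conj]
      _ < ρ := by rw [hz] at hA hB; nlinarith
  obtain ⟨z, hz, hfz⟩ := exists_mem_ball_eq_zero_of_norm_sub_lt hρ0
    ((hf_cont.sub continuousOn_const).mono (closedBall_subset_closedBall hρ1.le)) hf_near_id
  exact ⟨z, (mem_ball_zero_iff.mp hz).trans hρ1, sub_eq_zero.mp hfz⟩

theorem summable_and_mul_tsum_le_of_le {a s : ℕ → ℝ} {η : ℝ} (hη : 0 < η) (ha : ∀ n, 0 ≤ a n)
    (hs : ∀ n, η ≤ s n) (h : Summable fun n => s n * a n) :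
    Summable a ∧ η * ∑' n, a n ≤ ∑' n, s n * a n := by
  have hsa : Summable a := .of_nonneg_of_le ha
    (fun n => (le_div_iff₀' hη).mpr (mul_le_mul_of_nonneg_right (hs n) (ha n))) (h.div_const η)
  refine ⟨hsa, ?_⟩
  rw [← tsum_mul_left]
  exact (hsa.mul_left η).tsum_le_tsum (fun n => mul_le_mul_of_nonneg_right (hs n) (ha n)) h

theorem covering_radius_le_one_sub_tsum {σ Γ A B : ℕ → ℝ} {α : ℝ} (hα1 : α < 1)
    (hσ2 : 0 < σ 2) (hΓ2 : 0 < Γ 2)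
    (hσ : ∀ n, 2 ≤ n → σ n ≤ σ (n + 1)) (hΓ : ∀ n, 2 ≤ n → Γ n ≤ Γ (n + 1))
    (hA : ∀ n, 0 ≤ A (n + 2)) (hB : ∀ n, 0 ≤ B (n + 1))
    (hSA : Summable fun n => σ (n + 2) / (1 - α) * A (n + 2))
    (hSB : Summable fun n => Γ (n + 1) / (1 - α) * B (n + 1))
    (hsum : (∑' n, σ (n + 2) / (1 - α) * A (n + 2))
        + (∑' n, Γ (n + 1) / (1 - α) * B (n + 1)) ≤ 1) :
    (Summable fun n => A (n + 2)) ∧ (Summable fun n => B (n + 1)) ∧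
      (min (σ 2) (Γ 2) - 1 + α + (Γ 1 - min (σ 2) (Γ 2)) * B 1) / min (σ 2) (Γ 2)
        ≤ 1 - (∑' n, A (n + 2)) - ∑' n, B (n + 1) := by
  set η := min (σ 2) (Γ 2)
  have hη : 0 < η := lt_min hσ2 hΓ2
  have hc : 0 < 1 - α := sub_pos.mpr hα1
  have hmono : ∀ τ : ℕ → ℝ, (∀ n, 2 ≤ n → τ n ≤ τ (n + 1)) → ∀ n, τ 2 ≤ τ (n + 2) :=
    fun τ hτ n => monotone_nat_of_le_succ (f := fun n => τ (n + 2)) (fun n => hτ _ (by omega))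
      n.zero_le
  have hση : ∀ n, η / (1 - α) ≤ σ (n + 2) / (1 - α) := fun n =>
    div_le_div_of_nonneg_right ((min_le_left _ _).trans (hmono σ hσ n)) hc.le
  have hΓη : ∀ n, η / (1 - α) ≤ Γ (n + 2) / (1 - α) := fun n =>
    div_le_div_of_nonneg_right ((min_le_right _ _).trans (hmono Γ hΓ n)) hc.le
  obtain ⟨hsA, hA_le⟩ := summable_and_mul_tsum_le_of_le (div_pos hη hc) hA hση hSA
  obtain ⟨hsB', hB_le⟩ := summable_and_mul_tsum_le_of_le (div_pos hη hc) (fun n => hB (n + 1))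
    hΓη ((summable_nat_add_iff 1).mpr hSB)
  have hsB : Summable fun n => B (n + 1) := (summable_nat_add_iff 1).mp hsB'
  refine ⟨hsA, hsB, ?_⟩
  rw [hSB.tsum_eq_zero_add, zero_add] at hsum
  rw [hsB.tsum_eq_zero_add, zero_add, div_le_iff₀ hη]
  have key : η * (∑' n, A (n + 2)) + Γ 1 * B 1 + η * (∑' n, B (n + 2)) ≤ 1 - α := by
    rw [← div_le_one hc]
    calc _ = η / (1 - α) * (∑' n, A (n + 2)) + Γ 1 / (1 - α) * B 1
          + η / (1 - α) * (∑' n, B (n + 2)) := by ring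
      _ ≤ 1 := by linarith
  linarith

/-- Covering theorem for `TH(Φ_i, Ψ_j; α)`: under the hypotheses of the growth
theorem, `f(D)` contains the open disk of radius
`(1/η)(η - 1 + α + (Γ_1 - η) B_1)` centered at the origin, where
`η = min{σ_2, Γ_2}`, `σ_n = p_n - α u_n`, `Γ_n = q_n - ε α v_n`, `ε = (-1)^{j-i}`. -/
theorem TH_covering
    (α ε : ℝ) (hα : 0 ≤ α) (hα1 : α < 1) (hε : ε = 1 ∨ ε = -1)
    (p u q v A B : ℕ → ℝ)
    (hpu : ∀ n, 2 ≤ n → 0 ≤ u n ∧ u n < p n)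
    (hqv : ∀ n, 1 ≤ n → 0 ≤ v n ∧ v n < q n)
    (hA : ∀ n, 2 ≤ n → 0 ≤ A n) (hB : ∀ n, 1 ≤ n → 0 ≤ B n)
    (hSA : Summable fun n : ℕ => (p (n + 2) - α * u (n + 2)) / (1 - α) * A (n + 2))
    (hSB : Summable fun n : ℕ => (q (n + 1) - ε * α * v (n + 1)) / (1 - α) * B (n + 1))
    (hsum : (∑' n : ℕ, (p (n + 2) - α * u (n + 2)) / (1 - α) * A (n + 2))
        + (∑' n : ℕ, (q (n + 1) - ε * α * v (n + 1)) / (1 - α) * B (n + 1)) ≤ 1)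
    (hσ : ∀ n, 2 ≤ n → p n - α * u n ≤ p (n + 1) - α * u (n + 1))
    (hΓ : ∀ n, 1 ≤ n → q n - ε * α * v n ≤ q (n + 1) - ε * α * v (n + 1)) :
    ∀ w : ℂ, ‖w‖ < (min (p 2 - α * u 2) (q 2 - ε * α * v 2) - 1 + α
        + ((q 1 - ε * α * v 1) - min (p 2 - α * u 2) (q 2 - ε * α * v 2)) * B 1)
          / min (p 2 - α * u 2) (q 2 - ε * α * v 2) →
      ∃ z : ℂ, ‖z‖ < 1 ∧
        (z - ∑' n : ℕ, (A (n + 2) : ℂ) * z ^ (n + 2)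
          + starRingEnd ℂ (∑' n : ℕ, (B (n + 1) : ℂ) * z ^ (n + 1))) = w := by
  intro w hw
  have hσ2 : 0 < p 2 - α * u 2 := by
    obtain ⟨hu, hup⟩ := hpu 2 le_rfl
    nlinarith
  have hΓ2 : 0 < q 2 - ε * α * v 2 := by
    obtain ⟨hv, hvq⟩ := hqv 2 (by norm_num)
    rcases hε with rfl | rfl <;> nlinarith
  obtain ⟨hsA, hsB, hr⟩ := covering_radius_le_one_sub_tsum (σ := fun n => p n - α * u n)
    (Γ := fun n => q n - ε * α * v n) hα1 hσ2 hΓ2 hσ (fun n hn => hΓ n (by omega))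
    (fun n => hA _ (by omega)) (fun n => hB _ (by omega)) hSA hSB hsum
  exact exists_harmonic_eq_of_norm_lt (a := fun n => A (n + 2)) (b := fun n => B (n + 1))
    (fun n => hA _ (by omega)) (fun n => hB _ (by omega)) hsA hsB (hw.trans_le hr)
end

section
/- Let f(z) = z - Σ_{n≥2} A_n z^n + conj(Σ_{n≥1} B_n z^n) and F(z) = z - Σ_{n≥2} A'_n z^n + conj(Σ_{n≥1} B'_n z^n) with all coefficients ≥ 0, A'_n ≤ 1 and B'_n ≤ 1. If f ∈ TH(Φ_i,Ψ_j;α), then (f∗̂F)(z) := z - Σ_{n≥2} A_n A'_n z^n + conj(Σ_{n≥1} B_n B'_n z^n) also belongs to TH(Φ_i,Ψ_j;α). -/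
/-- The class `TH(Φ_i, Ψ_j; α)` (characterized by its coefficient inequality) is
closed under the coefficientwise product `∗̂` with any `F ∈ TH` whose coefficients
satisfy `A'_n ≤ 1`, `B'_n ≤ 1`.  Here `ε = (-1)^{j-i}`. -/
theorem TH_hat_product_with_bounded
    (α ε : ℝ) (hα : 0 ≤ α) (hα1 : α < 1) (hε : ε = 1 ∨ ε = -1)
    (p u q v A B A' B' : ℕ → ℝ)
    (hpu : ∀ n, 2 ≤ n → 0 ≤ u n ∧ u n < p n)
    (hqv : ∀ n, 1 ≤ n → 0 ≤ v n ∧ v n < q n)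
    (hA : ∀ n, 2 ≤ n → 0 ≤ A n) (hB : ∀ n, 1 ≤ n → 0 ≤ B n)
    (hA' : ∀ n, 2 ≤ n → 0 ≤ A' n ∧ A' n ≤ 1)
    (hB' : ∀ n, 1 ≤ n → 0 ≤ B' n ∧ B' n ≤ 1)
    (hSA : Summable fun n : ℕ => (p (n + 2) - α * u (n + 2)) / (1 - α) * A (n + 2))
    (hSB : Summable fun n : ℕ => (q (n + 1) - ε * α * v (n + 1)) / (1 - α) * B (n + 1))
    (hsum : (∑' n : ℕ, (p (n + 2) - α * u (n + 2)) / (1 - α) * A (n + 2))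
        + (∑' n : ℕ, (q (n + 1) - ε * α * v (n + 1)) / (1 - α) * B (n + 1)) ≤ 1) :
    (Summable fun n : ℕ => (p (n + 2) - α * u (n + 2)) / (1 - α) * (A (n + 2) * A' (n + 2))) ∧
    (Summable fun n : ℕ => (q (n + 1) - ε * α * v (n + 1)) / (1 - α) * (B (n + 1) * B' (n + 1))) ∧
    (∑' n : ℕ, (p (n + 2) - α * u (n + 2)) / (1 - α) * (A (n + 2) * A' (n + 2)))
        + (∑' n : ℕ, (q (n + 1) - ε * α * v (n + 1)) / (1 - α) * (B (n + 1) * B' (n + 1))) ≤ 1 := by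

  have h1α : (0:ℝ) < 1 - α := by linarith
  have hcA : ∀ n : ℕ, 0 ≤ (p (n + 2) - α * u (n + 2)) / (1 - α) := by
    intro n
    obtain ⟨hu, hup⟩ := hpu (n + 2) (by omega)
    apply div_nonneg _ h1α.le
    nlinarith
  have hcB : ∀ n : ℕ, 0 ≤ (q (n + 1) - ε * α * v (n + 1)) / (1 - α) := by
    intro n
    obtain ⟨hv, hvq⟩ := hqv (n + 1) (by omega)
    apply div_nonneg _ h1α.le
    rcases hε with h | h <;> subst h <;> nlinarith
  have hAle : ∀ n : ℕ,
      (p (n + 2) - α * u (n + 2)) / (1 - α) * (A (n + 2) * A' (n + 2))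
        ≤ (p (n + 2) - α * u (n + 2)) / (1 - α) * A (n + 2) := by
    intro n
    obtain ⟨h0, h1⟩ := hA' (n + 2) (by omega)
    have hAn := hA (n + 2) (by omega)
    have : A (n + 2) * A' (n + 2) ≤ A (n + 2) := by nlinarith
    exact mul_le_mul_of_nonneg_left this (hcA n)
  have hBle : ∀ n : ℕ,
      (q (n + 1) - ε * α * v (n + 1)) / (1 - α) * (B (n + 1) * B' (n + 1))
        ≤ (q (n + 1) - ε * α * v (n + 1)) / (1 - α) * B (n + 1) := by
    intro n
    obtain ⟨h0, h1⟩ := hB' (n + 1) (by omega)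
    have hBn := hB (n + 1) (by omega)
    have : B (n + 1) * B' (n + 1) ≤ B (n + 1) := by nlinarith
    exact mul_le_mul_of_nonneg_left this (hcB n)
  have hAnn : ∀ n : ℕ,
      0 ≤ (p (n + 2) - α * u (n + 2)) / (1 - α) * (A (n + 2) * A' (n + 2)) := by
    intro n
    exact mul_nonneg (hcA n) (mul_nonneg (hA _ (by omega)) (hA' _ (by omega)).1)
  have hBnn : ∀ n : ℕ,
      0 ≤ (q (n + 1) - ε * α * v (n + 1)) / (1 - α) * (B (n + 1) * B' (n + 1)) := by
    intro n
    exact mul_nonneg (hcB n) (mul_nonneg (hB _ (by omega)) (hB' _ (by omega)).1)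
  have hSA' : Summable fun n : ℕ =>
      (p (n + 2) - α * u (n + 2)) / (1 - α) * (A (n + 2) * A' (n + 2)) :=
    Summable.of_nonneg_of_le hAnn hAle hSA
  have hSB' : Summable fun n : ℕ =>
      (q (n + 1) - ε * α * v (n + 1)) / (1 - α) * (B (n + 1) * B' (n + 1)) :=
    Summable.of_nonneg_of_le hBnn hBle hSB
  refine ⟨hSA', hSB', ?_⟩
  have t1 := Summable.tsum_le_tsum hAle hSA' hSA
  have t2 := Summable.tsum_le_tsum hBle hSB' hSB
  linarith
end

section
/- If f, F ∈ TH(Φ_i,Ψ_j;α) with p_n ≥ 1 for all n ≥ 2 and q_n ≥ 1 for all n ≥ 1, then f∗̂F ∈ TH(Φ_i,Ψ_j;α). -/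
/-- If `f, F ∈ TH(Φ_i, Ψ_j; α)` and `p_n ≥ 1` (n ≥ 2), `q_n ≥ 1` (n ≥ 1),
then `f ∗̂ F ∈ TH(Φ_i, Ψ_j; α)`; membership is given by the coefficient
characterization.  Here `ε = (-1)^{j-i}`. -/
theorem TH_closed_under_hat_product
    (α ε : ℝ) (hα : 0 ≤ α) (hα1 : α < 1) (hε : ε = 1 ∨ ε = -1)
    (p u q v A B A' B' : ℕ → ℝ)
    (hpu : ∀ n, 2 ≤ n → 0 ≤ u n ∧ u n < p n)
    (hqv : ∀ n, 1 ≤ n → 0 ≤ v n ∧ v n < q n)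
    (hp1 : ∀ n, 2 ≤ n → 1 ≤ p n) (hq1 : ∀ n, 1 ≤ n → 1 ≤ q n)
    (hA : ∀ n, 2 ≤ n → 0 ≤ A n) (hB : ∀ n, 1 ≤ n → 0 ≤ B n)
    (hA' : ∀ n, 2 ≤ n → 0 ≤ A' n) (hB' : ∀ n, 1 ≤ n → 0 ≤ B' n)
    (hSA : Summable fun n : ℕ => (p (n + 2) - α * u (n + 2)) / (1 - α) * A (n + 2))
    (hSB : Summable fun n : ℕ => (q (n + 1) - ε * α * v (n + 1)) / (1 - α) * B (n + 1))
    (hsum : (∑' n : ℕ, (p (n + 2) - α * u (n + 2)) / (1 - α) * A (n + 2))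
        + (∑' n : ℕ, (q (n + 1) - ε * α * v (n + 1)) / (1 - α) * B (n + 1)) ≤ 1)
    (hSA' : Summable fun n : ℕ => (p (n + 2) - α * u (n + 2)) / (1 - α) * A' (n + 2))
    (hSB' : Summable fun n : ℕ => (q (n + 1) - ε * α * v (n + 1)) / (1 - α) * B' (n + 1))
    (hsum' : (∑' n : ℕ, (p (n + 2) - α * u (n + 2)) / (1 - α) * A' (n + 2))
        + (∑' n : ℕ, (q (n + 1) - ε * α * v (n + 1)) / (1 - α) * B' (n + 1)) ≤ 1) :
    (Summable fun n : ℕ => (p (n + 2) - α * u (n + 2)) / (1 - α) * (A (n + 2) * A' (n + 2))) ∧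
    (Summable fun n : ℕ => (q (n + 1) - ε * α * v (n + 1)) / (1 - α) * (B (n + 1) * B' (n + 1))) ∧
    (∑' n : ℕ, (p (n + 2) - α * u (n + 2)) / (1 - α) * (A (n + 2) * A' (n + 2)))
        + (∑' n : ℕ, (q (n + 1) - ε * α * v (n + 1)) / (1 - α) * (B (n + 1) * B' (n + 1))) ≤ 1 := by
  have h1α : (0:ℝ) < 1 - α := by linarith
  -- coefficients ≥ 1
  have hc : ∀ n : ℕ, 1 ≤ (p (n + 2) - α * u (n + 2)) / (1 - α) := by
    intro n
    obtain ⟨hu0, hup⟩ := hpu (n + 2) (by omega)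
    have hp := hp1 (n + 2) (by omega)
    rw [le_div_iff₀ h1α]
    nlinarith [mul_nonneg hα (le_of_lt (sub_pos.mpr hup))]
  have hd : ∀ n : ℕ, 1 ≤ (q (n + 1) - ε * α * v (n + 1)) / (1 - α) := by
    intro n
    obtain ⟨hv0, hvq⟩ := hqv (n + 1) (by omega)
    have hq := hq1 (n + 1) (by omega)
    rw [le_div_iff₀ h1α]
    rcases hε with h | h <;> subst h <;>
      nlinarith [mul_nonneg hα (le_of_lt (sub_pos.mpr hvq)), mul_nonneg hα hv0]
  have hc0 : ∀ n : ℕ, 0 ≤ (p (n + 2) - α * u (n + 2)) / (1 - α) :=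
    fun n => le_trans zero_le_one (hc n)
  have hd0 : ∀ n : ℕ, 0 ≤ (q (n + 1) - ε * α * v (n + 1)) / (1 - α) :=
    fun n => le_trans zero_le_one (hd n)
  -- each term of the primed series is nonneg
  have htA' : ∀ n : ℕ, 0 ≤ (p (n + 2) - α * u (n + 2)) / (1 - α) * A' (n + 2) :=
    fun n => mul_nonneg (hc0 n) (hA' (n + 2) (by omega))
  have htB' : ∀ n : ℕ, 0 ≤ (q (n + 1) - ε * α * v (n + 1)) / (1 - α) * B' (n + 1) :=
    fun n => mul_nonneg (hd0 n) (hB' (n + 1) (by omega))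
  have hTB'0 : 0 ≤ ∑' n : ℕ, (q (n + 1) - ε * α * v (n + 1)) / (1 - α) * B' (n + 1) :=
    tsum_nonneg htB'
  have hTA'0 : 0 ≤ ∑' n : ℕ, (p (n + 2) - α * u (n + 2)) / (1 - α) * A' (n + 2) :=
    tsum_nonneg htA'
  -- A' n ≤ 1 and B' n ≤ 1
  have hA'le : ∀ n : ℕ, A' (n + 2) ≤ 1 := by
    intro n
    have h1 : (p (n + 2) - α * u (n + 2)) / (1 - α) * A' (n + 2)
        ≤ ∑' m : ℕ, (p (m + 2) - α * u (m + 2)) / (1 - α) * A' (m + 2) :=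
      Summable.le_tsum hSA' n (fun m _ => htA' m)
    have h2 := hc n
    have h3 := hA' (n + 2) (by omega)
    nlinarith
  have hB'le : ∀ n : ℕ, B' (n + 1) ≤ 1 := by
    intro n
    have h1 : (q (n + 1) - ε * α * v (n + 1)) / (1 - α) * B' (n + 1)
        ≤ ∑' m : ℕ, (q (m + 1) - ε * α * v (m + 1)) / (1 - α) * B' (m + 1) :=
      Summable.le_tsum hSB' n (fun m _ => htB' m)
    have h2 := hd n
    have h3 := hB' (n + 1) (by omega)
    nlinarith
  -- termwise bounds
  have hbA : ∀ n : ℕ, (p (n + 2) - α * u (n + 2)) / (1 - α) * (A (n + 2) * A' (n + 2))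
      ≤ (p (n + 2) - α * u (n + 2)) / (1 - α) * A (n + 2) := by
    intro n
    have := mul_le_of_le_one_right (hA (n + 2) (by omega)) (hA'le n)
    exact mul_le_mul_of_nonneg_left this (hc0 n)
  have hbB : ∀ n : ℕ, (q (n + 1) - ε * α * v (n + 1)) / (1 - α) * (B (n + 1) * B' (n + 1))
      ≤ (q (n + 1) - ε * α * v (n + 1)) / (1 - α) * B (n + 1) := by
    intro n
    have := mul_le_of_le_one_right (hB (n + 1) (by omega)) (hB'le n)
    exact mul_le_mul_of_nonneg_left this (hd0 n)
  have hnA : ∀ n : ℕ, 0 ≤ (p (n + 2) - α * u (n + 2)) / (1 - α) * (A (n + 2) * A' (n + 2)) :=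
    fun n => mul_nonneg (hc0 n) (mul_nonneg (hA (n + 2) (by omega)) (hA' (n + 2) (by omega)))
  have hnB : ∀ n : ℕ, 0 ≤ (q (n + 1) - ε * α * v (n + 1)) / (1 - α) * (B (n + 1) * B' (n + 1)) :=
    fun n => mul_nonneg (hd0 n) (mul_nonneg (hB (n + 1) (by omega)) (hB' (n + 1) (by omega)))
  have hsA : Summable fun n : ℕ =>
      (p (n + 2) - α * u (n + 2)) / (1 - α) * (A (n + 2) * A' (n + 2)) :=
    Summable.of_nonneg_of_le hnA hbA hSA
  have hsB : Summable fun n : ℕ =>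
      (q (n + 1) - ε * α * v (n + 1)) / (1 - α) * (B (n + 1) * B' (n + 1)) :=
    Summable.of_nonneg_of_le hnB hbB hSB
  refine ⟨hsA, hsB, ?_⟩
  have t1 := Summable.tsum_le_tsum hbA hsA hSA
  have t2 := Summable.tsum_le_tsum hbB hsB hSB
  linarith
end

section
/- If f ∈ TH(Φ_i,Ψ_j;α) and γ > -1, then the Bernardi-type integral transform L_γ[f](z) = ((γ+1)/z^γ)∫_0^z t^{γ-1}h(t)dt + conj(((γ+1)/z^γ)∫_0^z t^{γ-1}g(t)dt), for f = h + conj(g), also belongs to TH(Φ_i,Ψ_j;α). Equivalently, replacing each A_n by ((γ+1)/(γ+n))A_n and each B_n by ((γ+1)/(γ+n))B_n preserves the coefficient inequality defining the class. -/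
/-- The Bernardi-type integral transform `L_γ` (γ > -1), which replaces `A_n` by
`((γ+1)/(γ+n)) A_n` and `B_n` by `((γ+1)/(γ+n)) B_n`, preserves the class
`TH(Φ_i, Ψ_j; α)` (characterized by the coefficient inequality); `ε = (-1)^{j-i}`. -/
theorem TH_preserved_by_Bernardi_transform
    (α ε γ : ℝ) (hα : 0 ≤ α) (hα1 : α < 1) (hε : ε = 1 ∨ ε = -1) (hγ : -1 < γ)
    (p u q v A B : ℕ → ℝ)
    (hpu : ∀ n, 2 ≤ n → 0 ≤ u n ∧ u n < p n)
    (hqv : ∀ n, 1 ≤ n → 0 ≤ v n ∧ v n < q n)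
    (hA : ∀ n, 2 ≤ n → 0 ≤ A n) (hB : ∀ n, 1 ≤ n → 0 ≤ B n)
    (hSA : Summable fun n : ℕ => (p (n + 2) - α * u (n + 2)) / (1 - α) * A (n + 2))
    (hSB : Summable fun n : ℕ => (q (n + 1) - ε * α * v (n + 1)) / (1 - α) * B (n + 1))
    (hsum : (∑' n : ℕ, (p (n + 2) - α * u (n + 2)) / (1 - α) * A (n + 2))
        + (∑' n : ℕ, (q (n + 1) - ε * α * v (n + 1)) / (1 - α) * B (n + 1)) ≤ 1) :
    (Summable fun n : ℕ =>
      (p (n + 2) - α * u (n + 2)) / (1 - α) * ((γ + 1) / (γ + (n + 2 : ℕ)) * A (n + 2))) ∧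
    (Summable fun n : ℕ =>
      (q (n + 1) - ε * α * v (n + 1)) / (1 - α) * ((γ + 1) / (γ + (n + 1 : ℕ)) * B (n + 1))) ∧
    (∑' n : ℕ, (p (n + 2) - α * u (n + 2)) / (1 - α) * ((γ + 1) / (γ + (n + 2 : ℕ)) * A (n + 2)))
      + (∑' n : ℕ, (q (n + 1) - ε * α * v (n + 1)) / (1 - α) * ((γ + 1) / (γ + (n + 1 : ℕ)) * B (n + 1)))
      ≤ 1 := by
  have h1α : (0:ℝ) < 1 - α := by linarith
  -- the Bernardi factor lies in [0,1]
  have hfrac : ∀ m : ℕ, 1 ≤ m → 0 ≤ (γ + 1) / (γ + (m : ℝ)) ∧ (γ + 1) / (γ + (m : ℝ)) ≤ 1 := by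
    intro m hm
    have hm' : (1:ℝ) ≤ (m : ℝ) := by exact_mod_cast hm
    have hpos : (0:ℝ) < γ + m := by linarith
    constructor
    · exact div_nonneg (by linarith) hpos.le
    · rw [div_le_one hpos]; linarith
  -- nonnegativity of the coefficient factors
  have hcA : ∀ n : ℕ, 0 ≤ (p (n + 2) - α * u (n + 2)) / (1 - α) := by
    intro n
    obtain ⟨h0, h1⟩ := hpu (n + 2) (by omega)
    have : α * u (n + 2) ≤ u (n + 2) := by nlinarith
    apply div_nonneg _ h1α.le; linarith
  have hcB : ∀ n : ℕ, 0 ≤ (q (n + 1) - ε * α * v (n + 1)) / (1 - α) := by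
    intro n
    obtain ⟨h0, h1⟩ := hqv (n + 1) (by omega)
    have hle : ε * α * v (n + 1) ≤ v (n + 1) := by
      rcases hε with h | h <;> subst h <;> nlinarith
    apply div_nonneg _ h1α.le; linarith
  -- new terms are nonneg and bounded by old terms
  have hboundA : ∀ n : ℕ,
      (p (n + 2) - α * u (n + 2)) / (1 - α) * ((γ + 1) / (γ + ((n + 2 : ℕ) : ℝ)) * A (n + 2))
      ≤ (p (n + 2) - α * u (n + 2)) / (1 - α) * A (n + 2) := by
    intro n
    obtain ⟨hf0, hf1⟩ := hfrac (n + 2) (by omega)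
    have hA' := hA (n + 2) (by omega)
    exact mul_le_mul_of_nonneg_left (by nlinarith) (hcA n)
  have hnnA : ∀ n : ℕ, 0 ≤
      (p (n + 2) - α * u (n + 2)) / (1 - α) * ((γ + 1) / (γ + ((n + 2 : ℕ) : ℝ)) * A (n + 2)) := by
    intro n
    obtain ⟨hf0, _⟩ := hfrac (n + 2) (by omega)
    exact mul_nonneg (hcA n) (mul_nonneg hf0 (hA (n + 2) (by omega)))
  have hboundB : ∀ n : ℕ,
      (q (n + 1) - ε * α * v (n + 1)) / (1 - α) * ((γ + 1) / (γ + ((n + 1 : ℕ) : ℝ)) * B (n + 1))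
      ≤ (q (n + 1) - ε * α * v (n + 1)) / (1 - α) * B (n + 1) := by
    intro n
    obtain ⟨hf0, hf1⟩ := hfrac (n + 1) (by omega)
    have hB' := hB (n + 1) (by omega)
    exact mul_le_mul_of_nonneg_left (by nlinarith) (hcB n)
  have hnnB : ∀ n : ℕ, 0 ≤
      (q (n + 1) - ε * α * v (n + 1)) / (1 - α) * ((γ + 1) / (γ + ((n + 1 : ℕ) : ℝ)) * B (n + 1)) := by
    intro n
    obtain ⟨hf0, _⟩ := hfrac (n + 1) (by omega)
    exact mul_nonneg (hcB n) (mul_nonneg hf0 (hB (n + 1) (by omega)))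
  have hSA' : Summable fun n : ℕ =>
      (p (n + 2) - α * u (n + 2)) / (1 - α) * ((γ + 1) / (γ + ((n + 2 : ℕ) : ℝ)) * A (n + 2)) :=
    Summable.of_nonneg_of_le hnnA hboundA hSA
  have hSB' : Summable fun n : ℕ =>
      (q (n + 1) - ε * α * v (n + 1)) / (1 - α) * ((γ + 1) / (γ + ((n + 1 : ℕ) : ℝ)) * B (n + 1)) :=
    Summable.of_nonneg_of_le hnnB hboundB hSB
  refine ⟨hSA', hSB', ?_⟩
  have h1 := Summable.tsum_le_tsum hboundA hSA' hSA
  have h2 := Summable.tsum_le_tsum hboundB hSB' hSB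
  linarith
end

section
/- If f ∈ TH(Φ_i,Ψ_j;α) and -1 ≤ δ < 1, then G_δ[f] ∈ TH(Φ_i,Ψ_j;α), where G_δ[f] replaces each coefficient A_n by ((1-δ^n)/((1-δ)n))A_n and each B_n by ((1-δ^n)/((1-δ)n))B_n. In particular one must show 0 ≤ (1-δ^n)/((1-δ)n) ≤ 1 for all n ≥ 1. -/
lemma Gdelta_coeff_bounds (δ : ℝ) (hδ : -1 ≤ δ) (hδ1 : δ < 1) (n : ℕ) (hn : 1 ≤ n) :
    0 ≤ (1 - δ ^ n) / ((1 - δ) * n) ∧ (1 - δ ^ n) / ((1 - δ) * n) ≤ 1 := by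
  have hd : (0:ℝ) < (1 - δ) * n := by
    apply mul_pos (by linarith)
    exact_mod_cast Nat.pos_of_ne_zero (by omega)
  have habs : |δ| ≤ 1 := abs_le.mpr ⟨hδ, hδ1.le⟩
  have hpow : δ ^ n ≤ 1 := by
    calc δ ^ n ≤ |δ ^ n| := le_abs_self _
    _ = |δ| ^ n := abs_pow _ _
    _ ≤ 1 := pow_le_one₀ (abs_nonneg _) habs
  constructor
  · exact div_nonneg (by linarith) hd.le
  · rw [div_le_one hd]
    have key : 1 - δ ^ n = (1 - δ) * ∑ k ∈ Finset.range n, δ ^ k := by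
      have := geom_sum_mul δ n
      nlinarith [this]
    rw [key]
    have hsum : ∑ k ∈ Finset.range n, δ ^ k ≤ n := by
      calc ∑ k ∈ Finset.range n, δ ^ k ≤ ∑ k ∈ Finset.range n, (1:ℝ) := by
            apply Finset.sum_le_sum
            intro k _
            calc δ ^ k ≤ |δ ^ k| := le_abs_self _
            _ = |δ| ^ k := abs_pow _ _
            _ ≤ 1 := pow_le_one₀ (abs_nonneg _) habs
      _ = n := by simp
    exact mul_le_mul_of_nonneg_left hsum (by linarith)

/-- The integral transform `G_δ` (−1 ≤ δ < 1), which replaces `A_n` by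
`((1-δ^n)/((1-δ)n)) A_n` and `B_n` by `((1-δ^n)/((1-δ)n)) B_n`, preserves the
class `TH(Φ_i, Ψ_j; α)`; in particular `0 ≤ (1-δ^n)/((1-δ)n) ≤ 1` for `n ≥ 1`.
Here `ε = (-1)^{j-i}`. -/
theorem TH_preserved_by_Gdelta_transform
    (α ε δ : ℝ) (hα : 0 ≤ α) (hα1 : α < 1) (hε : ε = 1 ∨ ε = -1)
    (hδ : -1 ≤ δ) (hδ1 : δ < 1)
    (p u q v A B : ℕ → ℝ)
    (hpu : ∀ n, 2 ≤ n → 0 ≤ u n ∧ u n < p n)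
    (hqv : ∀ n, 1 ≤ n → 0 ≤ v n ∧ v n < q n)
    (hA : ∀ n, 2 ≤ n → 0 ≤ A n) (hB : ∀ n, 1 ≤ n → 0 ≤ B n)
    (hSA : Summable fun n : ℕ => (p (n + 2) - α * u (n + 2)) / (1 - α) * A (n + 2))
    (hSB : Summable fun n : ℕ => (q (n + 1) - ε * α * v (n + 1)) / (1 - α) * B (n + 1))
    (hsum : (∑' n : ℕ, (p (n + 2) - α * u (n + 2)) / (1 - α) * A (n + 2))
        + (∑' n : ℕ, (q (n + 1) - ε * α * v (n + 1)) / (1 - α) * B (n + 1)) ≤ 1) :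
    (∀ n : ℕ, 1 ≤ n → 0 ≤ (1 - δ ^ n) / ((1 - δ) * n) ∧ (1 - δ ^ n) / ((1 - δ) * n) ≤ 1) ∧
    (Summable fun n : ℕ => (p (n + 2) - α * u (n + 2)) / (1 - α)
        * ((1 - δ ^ (n + 2)) / ((1 - δ) * (n + 2 : ℕ)) * A (n + 2))) ∧
    (Summable fun n : ℕ => (q (n + 1) - ε * α * v (n + 1)) / (1 - α)
        * ((1 - δ ^ (n + 1)) / ((1 - δ) * (n + 1 : ℕ)) * B (n + 1))) ∧
    (∑' n : ℕ, (p (n + 2) - α * u (n + 2)) / (1 - α)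
        * ((1 - δ ^ (n + 2)) / ((1 - δ) * (n + 2 : ℕ)) * A (n + 2)))
      + (∑' n : ℕ, (q (n + 1) - ε * α * v (n + 1)) / (1 - α)
        * ((1 - δ ^ (n + 1)) / ((1 - δ) * (n + 1 : ℕ)) * B (n + 1))) ≤ 1 := by
  have hc := Gdelta_coeff_bounds δ hδ hδ1
  -- nonnegativity of coefficient factors
  have hPA : ∀ n : ℕ, 0 ≤ (p (n + 2) - α * u (n + 2)) / (1 - α) := by
    intro n
    obtain ⟨h1, h2⟩ := hpu (n + 2) (by omega)
    apply div_nonneg _ (by linarith)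
    nlinarith
  have hQB : ∀ n : ℕ, 0 ≤ (q (n + 1) - ε * α * v (n + 1)) / (1 - α) := by
    intro n
    obtain ⟨h1, h2⟩ := hqv (n + 1) (by omega)
    apply div_nonneg _ (by linarith)
    rcases hε with rfl | rfl <;> nlinarith
  -- termwise nonneg and bound for new series
  have hnn2 : ∀ n : ℕ, 0 ≤ (p (n + 2) - α * u (n + 2)) / (1 - α)
      * ((1 - δ ^ (n + 2)) / ((1 - δ) * (n + 2 : ℕ)) * A (n + 2)) := fun n =>
    mul_nonneg (hPA n) (mul_nonneg (hc (n+2) (by omega)).1 (hA (n+2) (by omega)))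
  have hnn1 : ∀ n : ℕ, 0 ≤ (q (n + 1) - ε * α * v (n + 1)) / (1 - α)
      * ((1 - δ ^ (n + 1)) / ((1 - δ) * (n + 1 : ℕ)) * B (n + 1)) := fun n =>
    mul_nonneg (hQB n) (mul_nonneg (hc (n+1) (by omega)).1 (hB (n+1) (by omega)))
  have hle2 : ∀ n : ℕ, (p (n + 2) - α * u (n + 2)) / (1 - α)
      * ((1 - δ ^ (n + 2)) / ((1 - δ) * (n + 2 : ℕ)) * A (n + 2))
      ≤ (p (n + 2) - α * u (n + 2)) / (1 - α) * A (n + 2) := by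
    intro n
    apply mul_le_mul_of_nonneg_left _ (hPA n)
    calc (1 - δ ^ (n + 2)) / ((1 - δ) * (n + 2 : ℕ)) * A (n + 2)
        ≤ 1 * A (n + 2) :=
          mul_le_mul_of_nonneg_right (hc (n+2) (by omega)).2 (hA (n+2) (by omega))
      _ = A (n + 2) := one_mul _
  have hle1 : ∀ n : ℕ, (q (n + 1) - ε * α * v (n + 1)) / (1 - α)
      * ((1 - δ ^ (n + 1)) / ((1 - δ) * (n + 1 : ℕ)) * B (n + 1))
      ≤ (q (n + 1) - ε * α * v (n + 1)) / (1 - α) * B (n + 1) := by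
    intro n
    apply mul_le_mul_of_nonneg_left _ (hQB n)
    calc (1 - δ ^ (n + 1)) / ((1 - δ) * (n + 1 : ℕ)) * B (n + 1)
        ≤ 1 * B (n + 1) :=
          mul_le_mul_of_nonneg_right (hc (n+1) (by omega)).2 (hB (n+1) (by omega))
      _ = B (n + 1) := one_mul _
  have hS2 := Summable.of_nonneg_of_le hnn2 hle2 hSA
  have hS1 := Summable.of_nonneg_of_le hnn1 hle1 hSB
  refine ⟨hc, hS2, hS1, ?_⟩
  have t2 := Summable.tsum_le_tsum hle2 hS2 hSA
  have t1 := Summable.tsum_le_tsum hle1 hS1 hSB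
  linarith
end

section
/- Let f ∈ TH(Φ_i,Ψ_j;α) with p_n ≥ 1 and q_n ≥ 1, and let a_k,b_k > 0, c_k > a_k + b_k for k = 1,2 satisfy F(a_1,b_1,c_1;1) + F(a_2,b_2,c_2;1) ≤ 3. Then f∗̂Φ ∈ TH(Φ_i,Ψ_j;α), where Φ(z) = 2z - z·F(a_1,b_1,c_1;z) + conj(F(a_2,b_2,c_2;z) - 1); here (f∗̂Φ)(z) = z - Σ_{n≥2} ((a_1)_{n-1}(b_1)_{n-1}/((c_1)_{n-1}(1)_{n-1})) A_n z^n + conj(Σ_{n≥1} ((a_2)_n(b_2)_n/((c_2)_n(1)_n)) B_n z^n). -/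
/-- The Pochhammer symbol `(x)_n = x(x+1)⋯(x+n-1)` for a real number `x`. -/
def poch (x : ℝ) (n : ℕ) : ℝ := ∏ i ∈ Finset.range n, (x + i)

lemma poch_pos {x : ℝ} (hx : 0 < x) (n : ℕ) : 0 < poch x n :=
  Finset.prod_pos fun i _ => by positivity

noncomputable def hgt (a b c : ℝ) (n : ℕ) : ℝ :=
  poch a n * poch b n / (poch c n * n.factorial)

lemma hgt_pos {a b c : ℝ} (ha : 0 < a) (hb : 0 < b) (hc : 0 < c) (n : ℕ) :
    0 < hgt a b c n := by
  have h1 := poch_pos ha n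
  have h2 := poch_pos hb n
  have h3 := poch_pos hc n
  have h4 : (0:ℝ) < n.factorial := by exact_mod_cast n.factorial_pos
  exact div_pos (mul_pos h1 h2) (mul_pos h3 h4)

lemma hgt_zero (a b c : ℝ) : hgt a b c 0 = 1 := by
  simp [hgt, poch]

lemma hgt_rec {a b c : ℝ} (hc : 0 < c) (n : ℕ) :
    hgt a b c (n + 1) * ((c + n) * ((n:ℝ) + 1)) = hgt a b c n * ((a + n) * (b + n)) := by
  have h3 : (0:ℝ) < poch c n := poch_pos hc n
  have h4 : (0:ℝ) < n.factorial := by exact_mod_cast n.factorial_pos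
  have hcn : (0:ℝ) < c + n := by positivity
  have hn1 : (0:ℝ) < (n:ℝ) + 1 := by positivity
  unfold hgt poch
  rw [Finset.prod_range_succ, Finset.prod_range_succ, Finset.prod_range_succ,
    Nat.factorial_succ]
  unfold poch at h3
  push_cast
  field_simp

lemma summable_hgt {a b c : ℝ} (ha : 0 < a) (hb : 0 < b) (hc : a + b < c) :
    Summable (hgt a b c) := by
  have hc0 : 0 < c := by linarith
  set d := c - a - b with hd
  have hd0 : 0 < d := by simp [hd]; linarith
  set E := c - a * b - a - b - d * (c + 1) with hE
  set G := a * b + d * c with hG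
  set κ := |E| + |G| + 1 with hκ
  have hκ0 : 0 < κ := by positivity
  obtain ⟨N, hN⟩ := exists_nat_ge (max 1 ((a * b - c) / d + 1))
  -- step inequality for n ≥ N
  have step : ∀ n : ℕ, (N:ℝ) ≤ (n:ℝ) →
      d * hgt a b c n ≤ ((n:ℝ) + κ) * hgt a b c n
        - (((n:ℝ) + 1) + κ) * hgt a b c (n + 1) := by
    intro n hn
    have ht := hgt_pos ha hb hc0 n
    have hD : (0:ℝ) < (c + n) * ((n:ℝ) + 1) := by positivity
    have hn1 : (1:ℝ) ≤ (n:ℝ) := le_trans (le_trans (le_max_left _ _) hN) hn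
    have hn2 : a * b - c ≤ d * n := by
      have h1 : (a * b - c) / d + 1 ≤ (n:ℝ) :=
        le_trans (le_trans (le_max_right _ _) hN) hn
      have h2 : (a * b - c) / d ≤ (n:ℝ) - 1 := by linarith
      have := (div_le_iff₀ hd0).mp h2
      nlinarith
    have hpoly : d * ((c + n) * ((n:ℝ) + 1)) ≤
        ((n:ℝ) + κ) * ((c + n) * ((n:ℝ) + 1))
          - (((n:ℝ) + 1) + κ) * ((a + n) * (b + n)) := by
      have hid : ((n:ℝ) + κ) * ((c + n) * ((n:ℝ) + 1))
          - (((n:ℝ) + 1) + κ) * ((a + n) * (b + n))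
          - d * ((c + n) * ((n:ℝ) + 1))
          = κ * ((d + 1) * n + c - a * b) + E * n - G := by
        simp only [hE, hG, hd]; ring
      have h3 : 0 ≤ d * n + c - a * b := by linarith
      have h4 : -E ≤ |E| := by have := neg_abs_le E; linarith
      have h5 : G ≤ |G| := le_abs_self G
      have h6 : (0:ℝ) ≤ |E| := abs_nonneg E
      have h7 : (0:ℝ) ≤ |G| := abs_nonneg G
      nlinarith [mul_nonneg hκ0.le h3, mul_nonneg h6 (by linarith : (0:ℝ) ≤ (n:ℝ) - 1),
        mul_nonneg h7 (by linarith : (0:ℝ) ≤ (n:ℝ) - 1)]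
    have hmul : (d * hgt a b c n) * ((c + n) * ((n:ℝ) + 1)) ≤
        (((n:ℝ) + κ) * hgt a b c n - (((n:ℝ) + 1) + κ) * hgt a b c (n + 1))
          * ((c + n) * ((n:ℝ) + 1)) := by
      have h1 : (((n:ℝ) + κ) * hgt a b c n - (((n:ℝ) + 1) + κ) * hgt a b c (n + 1))
          * ((c + n) * ((n:ℝ) + 1))
          = ((n:ℝ) + κ) * hgt a b c n * ((c + n) * ((n:ℝ) + 1))
            - (((n:ℝ) + 1) + κ) * (hgt a b c (n + 1) * ((c + n) * ((n:ℝ) + 1))) := by ring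
      rw [h1, hgt_rec hc0 n]
      calc (d * hgt a b c n) * ((c + n) * ((n:ℝ) + 1))
          = hgt a b c n * (d * ((c + n) * ((n:ℝ) + 1))) := by ring
        _ ≤ hgt a b c n * (((n:ℝ) + κ) * ((c + n) * ((n:ℝ) + 1))
              - (((n:ℝ) + 1) + κ) * ((a + n) * (b + n))) :=
            mul_le_mul_of_nonneg_left hpoly ht.le
        _ = ((n:ℝ) + κ) * hgt a b c n * ((c + n) * ((n:ℝ) + 1))
              - (((n:ℝ) + 1) + κ) * (hgt a b c n * ((a + n) * (b + n))) := by ring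
    exact le_of_mul_le_mul_right hmul hD
  -- bounded partial sums for the shifted sequence
  have hnn : ∀ n, 0 ≤ hgt a b c n := fun n => (hgt_pos ha hb hc0 n).le
  set g : ℕ → ℝ := fun i => (((N + i : ℕ):ℝ) + κ) * hgt a b c (N + i) with hg
  have hgnn : ∀ i, 0 ≤ g i := fun i => by
    apply mul_nonneg _ (hnn _); positivity
  have hbdd : ∀ m, ∑ i ∈ Finset.range m, d * hgt a b c (N + i) ≤ g 0 := by
    intro m
    calc ∑ i ∈ Finset.range m, d * hgt a b c (N + i)
        ≤ ∑ i ∈ Finset.range m, (g i - g (i + 1)) := by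
          apply Finset.sum_le_sum
          intro i _
          have h := step (N + i) (by push_cast; linarith [Nat.cast_nonneg (α := ℝ) i])
          have heq : N + i + 1 = N + (i + 1) := by omega
          rw [heq] at h
          simp only [hg]
          push_cast
          push_cast at h
          linarith
      _ = g 0 - g m := Finset.sum_range_sub' g m
      _ ≤ g 0 := by linarith [hgnn m]
  have hsum_bdd : ∀ m, ∑ i ∈ Finset.range m, hgt a b c (N + i) ≤ g 0 / d := by
    intro m
    rw [le_div_iff₀ hd0]
    calc (∑ i ∈ Finset.range m, hgt a b c (N + i)) * d
        = ∑ i ∈ Finset.range m, d * hgt a b c (N + i) := by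
          rw [Finset.sum_mul]; congr 1; ext i; ring
      _ ≤ g 0 := hbdd m
  have hshift : Summable fun i => hgt a b c (N + i) :=
    summable_of_sum_range_le (fun i => hnn _) hsum_bdd
  have hshift' : Summable fun i => hgt a b c (i + N) := by
    simpa [Nat.add_comm] using hshift
  exact (summable_nat_add_iff N).mp hshift'

lemma hgt_le_one {a₁ b₁ c₁ a₂ b₂ c₂ : ℝ}
    (ha₁ : 0 < a₁) (hb₁ : 0 < b₁) (hc₁ : a₁ + b₁ < c₁)
    (ha₂ : 0 < a₂) (hb₂ : 0 < b₂) (hc₂ : a₂ + b₂ < c₂)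
    (hF : (∑' n : ℕ, hgt a₁ b₁ c₁ n) + (∑' n : ℕ, hgt a₂ b₂ c₂ n) ≤ 3)
    (m : ℕ) (hm : 1 ≤ m) : hgt a₁ b₁ c₁ m ≤ 1 := by
  have hc₁0 : 0 < c₁ := by linarith
  have hc₂0 : 0 < c₂ := by linarith
  have S₁ := summable_hgt ha₁ hb₁ hc₁
  have S₂ := summable_hgt ha₂ hb₂ hc₂
  have h2 : (1:ℝ) ≤ ∑' n : ℕ, hgt a₂ b₂ c₂ n := by
    have := Summable.le_tsum S₂ 0 (fun i _ => (hgt_pos ha₂ hb₂ hc₂0 i).le)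
    rwa [hgt_zero] at this
  have h1 : 1 + hgt a₁ b₁ c₁ m ≤ ∑' n : ℕ, hgt a₁ b₁ c₁ n := by
    have hne : (0:ℕ) ≠ m := by omega
    have := Summable.sum_le_tsum {0, m} (fun i _ => (hgt_pos ha₁ hb₁ hc₁0 i).le) S₁
    rwa [Finset.sum_pair hne, hgt_zero] at this
  linarith


/-- If `f ∈ TH(Φ_i, Ψ_j; α)` (coefficient characterization, `ε = (-1)^{j-i}`),
`a_k, b_k > 0`, `c_k > a_k + b_k` and `F(a₁,b₁,c₁;1) + F(a₂,b₂,c₂;1) ≤ 3`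
(with `F(a,b,c;1) = Σ_{n≥0} (a)_n(b)_n/((c)_n(1)_n)`), then
`f ∗̂ Φ ∈ TH(Φ_i, Ψ_j; α)`, where `Φ(z) = 2z - zF(a₁,b₁,c₁;z) + conj(F(a₂,b₂,c₂;z)-1)`,
i.e. the new coefficients are `((a₁)_{n-1}(b₁)_{n-1}/((c₁)_{n-1}(1)_{n-1})) A_n` and
`((a₂)_n(b₂)_n/((c₂)_n(1)_n)) B_n`. -/
theorem TH_hat_product_with_hypergeometric
    (α ε : ℝ) (hα : 0 ≤ α) (hα1 : α < 1) (hε : ε = 1 ∨ ε = -1)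
    (a₁ b₁ c₁ a₂ b₂ c₂ : ℝ)
    (ha₁ : 0 < a₁) (hb₁ : 0 < b₁) (hc₁ : a₁ + b₁ < c₁)
    (ha₂ : 0 < a₂) (hb₂ : 0 < b₂) (hc₂ : a₂ + b₂ < c₂)
    (hF : (∑' n : ℕ, poch a₁ n * poch b₁ n / (poch c₁ n * n.factorial))
        + (∑' n : ℕ, poch a₂ n * poch b₂ n / (poch c₂ n * n.factorial)) ≤ 3)
    (p u q v A B : ℕ → ℝ)
    (hpu : ∀ n, 2 ≤ n → 0 ≤ u n ∧ u n < p n)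
    (hqv : ∀ n, 1 ≤ n → 0 ≤ v n ∧ v n < q n)
    (hp1 : ∀ n, 2 ≤ n → 1 ≤ p n) (hq1 : ∀ n, 1 ≤ n → 1 ≤ q n)
    (hA : ∀ n, 2 ≤ n → 0 ≤ A n) (hB : ∀ n, 1 ≤ n → 0 ≤ B n)
    (hSA : Summable fun n : ℕ => (p (n + 2) - α * u (n + 2)) / (1 - α) * A (n + 2))
    (hSB : Summable fun n : ℕ => (q (n + 1) - ε * α * v (n + 1)) / (1 - α) * B (n + 1))
    (hsum : (∑' n : ℕ, (p (n + 2) - α * u (n + 2)) / (1 - α) * A (n + 2))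
        + (∑' n : ℕ, (q (n + 1) - ε * α * v (n + 1)) / (1 - α) * B (n + 1)) ≤ 1) :
    (Summable fun n : ℕ => (p (n + 2) - α * u (n + 2)) / (1 - α)
        * (poch a₁ (n + 1) * poch b₁ (n + 1) / (poch c₁ (n + 1) * (n + 1).factorial) * A (n + 2))) ∧
    (Summable fun n : ℕ => (q (n + 1) - ε * α * v (n + 1)) / (1 - α)
        * (poch a₂ (n + 1) * poch b₂ (n + 1) / (poch c₂ (n + 1) * (n + 1).factorial) * B (n + 1))) ∧
    (∑' n : ℕ, (p (n + 2) - α * u (n + 2)) / (1 - α)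
        * (poch a₁ (n + 1) * poch b₁ (n + 1) / (poch c₁ (n + 1) * (n + 1).factorial) * A (n + 2)))
      + (∑' n : ℕ, (q (n + 1) - ε * α * v (n + 1)) / (1 - α)
        * (poch a₂ (n + 1) * poch b₂ (n + 1) / (poch c₂ (n + 1) * (n + 1).factorial) * B (n + 1)))
      ≤ 1 := by
  have hc₁0 : 0 < c₁ := by linarith
  have hc₂0 : 0 < c₂ := by linarith
  have hF' : (∑' n : ℕ, hgt a₁ b₁ c₁ n) + (∑' n : ℕ, hgt a₂ b₂ c₂ n) ≤ 3 := hF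
  have hF'' : (∑' n : ℕ, hgt a₂ b₂ c₂ n) + (∑' n : ℕ, hgt a₁ b₁ c₁ n) ≤ 3 := by linarith
  have t1le : ∀ m, 1 ≤ m → hgt a₁ b₁ c₁ m ≤ 1 :=
    hgt_le_one ha₁ hb₁ hc₁ ha₂ hb₂ hc₂ hF'
  have t2le : ∀ m, 1 ≤ m → hgt a₂ b₂ c₂ m ≤ 1 :=
    hgt_le_one ha₂ hb₂ hc₂ ha₁ hb₁ hc₁ hF''
  have hα' : 0 < 1 - α := by linarith
  have hw1 : ∀ n : ℕ, 0 ≤ (p (n + 2) - α * u (n + 2)) / (1 - α) := by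
    intro n
    obtain ⟨hu0, hup⟩ := hpu (n + 2) (by omega)
    apply div_nonneg _ hα'.le
    nlinarith
  have hw2 : ∀ n : ℕ, 0 ≤ (q (n + 1) - ε * α * v (n + 1)) / (1 - α) := by
    intro n
    obtain ⟨hv0, hvq⟩ := hqv (n + 1) (by omega)
    apply div_nonneg _ hα'.le
    rcases hε with h | h <;> rw [h] <;> nlinarith
  -- first series
  have hnn1 : ∀ n : ℕ, 0 ≤ (p (n + 2) - α * u (n + 2)) / (1 - α)
      * (hgt a₁ b₁ c₁ (n + 1) * A (n + 2)) := fun n =>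
    mul_nonneg (hw1 n) (mul_nonneg (hgt_pos ha₁ hb₁ hc₁0 (n + 1)).le (hA (n + 2) (by omega)))
  have hle1 : ∀ n : ℕ, (p (n + 2) - α * u (n + 2)) / (1 - α)
      * (hgt a₁ b₁ c₁ (n + 1) * A (n + 2))
      ≤ (p (n + 2) - α * u (n + 2)) / (1 - α) * A (n + 2) := by
    intro n
    have h0 : 0 ≤ (p (n + 2) - α * u (n + 2)) / (1 - α) * A (n + 2) :=
      mul_nonneg (hw1 n) (hA (n + 2) (by omega))
    have ht := t1le (n + 1) (by omega)
    calc (p (n + 2) - α * u (n + 2)) / (1 - α) * (hgt a₁ b₁ c₁ (n + 1) * A (n + 2))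
        = ((p (n + 2) - α * u (n + 2)) / (1 - α) * A (n + 2)) * hgt a₁ b₁ c₁ (n + 1) := by ring
      _ ≤ ((p (n + 2) - α * u (n + 2)) / (1 - α) * A (n + 2)) * 1 :=
          mul_le_mul_of_nonneg_left ht h0
      _ = (p (n + 2) - α * u (n + 2)) / (1 - α) * A (n + 2) := by ring
  have Sum1 : Summable fun n : ℕ => (p (n + 2) - α * u (n + 2)) / (1 - α)
      * (hgt a₁ b₁ c₁ (n + 1) * A (n + 2)) :=
    Summable.of_nonneg_of_le hnn1 hle1 hSA
  have hts1 : (∑' n : ℕ, (p (n + 2) - α * u (n + 2)) / (1 - α)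
      * (hgt a₁ b₁ c₁ (n + 1) * A (n + 2)))
      ≤ ∑' n : ℕ, (p (n + 2) - α * u (n + 2)) / (1 - α) * A (n + 2) :=
    Summable.tsum_le_tsum hle1 Sum1 hSA
  -- second series
  have hnn2 : ∀ n : ℕ, 0 ≤ (q (n + 1) - ε * α * v (n + 1)) / (1 - α)
      * (hgt a₂ b₂ c₂ (n + 1) * B (n + 1)) := fun n =>
    mul_nonneg (hw2 n) (mul_nonneg (hgt_pos ha₂ hb₂ hc₂0 (n + 1)).le (hB (n + 1) (by omega)))
  have hle2 : ∀ n : ℕ, (q (n + 1) - ε * α * v (n + 1)) / (1 - α)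
      * (hgt a₂ b₂ c₂ (n + 1) * B (n + 1))
      ≤ (q (n + 1) - ε * α * v (n + 1)) / (1 - α) * B (n + 1) := by
    intro n
    have h0 : 0 ≤ (q (n + 1) - ε * α * v (n + 1)) / (1 - α) * B (n + 1) :=
      mul_nonneg (hw2 n) (hB (n + 1) (by omega))
    have ht := t2le (n + 1) (by omega)
    calc (q (n + 1) - ε * α * v (n + 1)) / (1 - α) * (hgt a₂ b₂ c₂ (n + 1) * B (n + 1))
        = ((q (n + 1) - ε * α * v (n + 1)) / (1 - α) * B (n + 1)) * hgt a₂ b₂ c₂ (n + 1) := by ring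
      _ ≤ ((q (n + 1) - ε * α * v (n + 1)) / (1 - α) * B (n + 1)) * 1 :=
          mul_le_mul_of_nonneg_left ht h0
      _ = (q (n + 1) - ε * α * v (n + 1)) / (1 - α) * B (n + 1) := by ring
  have Sum2 : Summable fun n : ℕ => (q (n + 1) - ε * α * v (n + 1)) / (1 - α)
      * (hgt a₂ b₂ c₂ (n + 1) * B (n + 1)) :=
    Summable.of_nonneg_of_le hnn2 hle2 hSB
  have hts2 : (∑' n : ℕ, (q (n + 1) - ε * α * v (n + 1)) / (1 - α)
      * (hgt a₂ b₂ c₂ (n + 1) * B (n + 1)))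
      ≤ ∑' n : ℕ, (q (n + 1) - ε * α * v (n + 1)) / (1 - α) * B (n + 1) :=
    Summable.tsum_le_tsum hle2 Sum2 hSB
  exact ⟨Sum1, Sum2, le_trans (add_le_add hts1 hts2) hsum⟩
end

section
/- If f ∈ TU_H(α), i.e., f(z) = z - Σ_{n≥2}A_n z^n + conj(Σ_{n≥1}B_n z^n) with A_n,B_n ≥ 0 and Σ_{n≥2}A_n + Σ_{n≥1}B_n ≤ 1-α, then for all z in the unit disk: (1-B_1)|z| - (1-α-B_1)|z|^2 ≤ |f(z)| ≤ (1+B_1)|z| + (1-α-B_1)|z|^2. In particular, f(D) contains the open disk {|w| < α}. -/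
open Complex

/-!
Write `f z = z - g z`. On `‖z‖ ≤ r ≤ 1` the perturbation `g` is dominated by the convex majorant
`φ r = ∑ Aₙ rⁿ + ∑ Bₙ rⁿ ≤ B₁ r + (1 - α - B₁) r²`, and the triangle inequality gives the growth
bounds. The equation `f z = w` is the fixed-point equation `z = w + g z`; on the closed disk of
radius `r` this map is `φ' r`-Lipschitz and maps the disk into itself once `‖w‖ + φ r ≤ r`.
Since `r - φ r ≥ α r`, such a radius with `φ' r < 1` exists for `‖w‖ < α`: take `r` just below
the first point where `φ'` reaches `1`, and conclude by the Banach fixed-point theorem.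
-/

open Finset in
theorem sum_range_pow_mul_pow_sub_one_sub (r : ℝ) (m : ℕ) :
    ∑ i ∈ range m, r ^ i * r ^ (m - 1 - i) = m * r ^ (m - 1) := by
  rw [sum_congr rfl fun i hi => by rw [← pow_add, Nat.add_sub_cancel' (by grind)]]
  simp

open Finset in
theorem natCast_mul_pow_sub_one_mul_sub_le {r s : ℝ} (hr : 0 ≤ r) (hrs : r ≤ s) (m : ℕ) :
    m * r ^ (m - 1) * (s - r) ≤ s ^ m - r ^ m := by
  rw [← geom_sum₂_mul, ← sum_range_pow_mul_pow_sub_one_sub]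
  gcongr

open Finset in
theorem norm_pow_sub_pow_le {R : Type*} [SeminormedCommRing R] [NormOneClass R] {x y : R} {r : ℝ}
    (hx : ‖x‖ ≤ r) (hy : ‖y‖ ≤ r) (m : ℕ) :
    ‖x ^ m - y ^ m‖ ≤ m * r ^ (m - 1) * ‖x - y‖ := by
  rw [← geom_sum₂_mul, ← sum_range_pow_mul_pow_sub_one_sub]
  refine (norm_mul_le _ _).trans (mul_le_mul_of_nonneg_right ?_ (norm_nonneg _))
  refine norm_sum_le_of_le _ fun i _ => (norm_mul_le _ _).trans ?_
  have hr : 0 ≤ r := (norm_nonneg x).trans hx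
  exact mul_le_mul ((norm_pow_le x i).trans (pow_le_pow_left₀ (norm_nonneg x) hx i))
    ((norm_pow_le y _).trans (pow_le_pow_left₀ (norm_nonneg y) hy _)) (norm_nonneg _)
    (pow_nonneg hr i)

theorem natCast_mul_pow_sub_one_le {r : ℝ} (hr : 0 ≤ r) (hr1 : r < 1) (m : ℕ) :
    m * r ^ (m - 1) ≤ (1 - r)⁻¹ := by
  have h := natCast_mul_pow_sub_one_mul_sub_le hr hr1.le m
  rw [one_pow] at h
  rw [← one_div, le_div_iff₀ (sub_pos.2 hr1)]
  linarith [pow_nonneg hr m]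

namespace ShiftedSeries

noncomputable def majorant (c : ℕ → ℝ) (k : ℕ) (r : ℝ) : ℝ :=
  ∑' n, c n * r ^ (n + k)

-- The term-wise derivative of `majorant c k`; the truncated exponent at `n + k = 0` is harmless,
-- the coefficient `n + k` vanishes there.
noncomputable def majorantDeriv (c : ℕ → ℝ) (k : ℕ) (r : ℝ) : ℝ :=
  ∑' n, ((n + k : ℕ) : ℝ) * c n * r ^ (n + k - 1)

variable {c : ℕ → ℝ} {k : ℕ} {r : ℝ}

theorem summable_mul_pow (hc : ∀ n, 0 ≤ c n) (hS : Summable c) (hr : 0 ≤ r) (hr1 : r ≤ 1) :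
    Summable fun n => c n * r ^ (n + k) :=
  hS.of_nonneg_of_le (fun n => mul_nonneg (hc n) (pow_nonneg hr _))
    fun n => mul_le_of_le_one_right (hc n) (pow_le_one₀ hr hr1)

theorem summable_deriv (hc : ∀ n, 0 ≤ c n) (hS : Summable c) (hr : 0 ≤ r) (hr1 : r < 1) :
    Summable fun n => ((n + k : ℕ) : ℝ) * c n * r ^ (n + k - 1) := by
  refine (hS.mul_right (1 - r)⁻¹).of_nonneg_of_le (fun n => by have := hc n; positivity)
    fun n => ?_
  rw [mul_right_comm, mul_comm (c n)]
  exact mul_le_mul_of_nonneg_right (natCast_mul_pow_sub_one_le hr hr1 _) (hc n)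

theorem majorantDeriv_nonneg (hc : ∀ n, 0 ≤ c n) (hr : 0 ≤ r) : 0 ≤ majorantDeriv c k r :=
  tsum_nonneg fun n => by have := hc n; positivity

theorem majorant_le_tsum_mul_pow (hc : ∀ n, 0 ≤ c n) (hS : Summable c) (hr : 0 ≤ r)
    (hr1 : r ≤ 1) : majorant c k r ≤ (∑' n, c n) * r ^ k := by
  rw [← tsum_mul_right]
  refine (summable_mul_pow hc hS hr hr1).tsum_le_tsum (fun n => ?_) (hS.mul_right _)
  exact mul_le_mul_of_nonneg_left (pow_le_pow_of_le_one hr hr1 (by omega)) (hc n)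

theorem majorant_eq_add (hc : ∀ n, 0 ≤ c n) (hS : Summable c) (hr : 0 ≤ r) (hr1 : r ≤ 1) :
    majorant c k r = c 0 * r ^ k + majorant (fun n => c (n + 1)) (k + 1) r := by
  rw [majorant, (summable_mul_pow hc hS hr hr1).tsum_eq_zero_add, majorant, zero_add]
  simp only [add_right_comm _ 1 k, add_assoc]

theorem majorantDeriv_mul_sub_le (hc : ∀ n, 0 ≤ c n) (hS : Summable c) {s : ℝ} (hr : 0 ≤ r)
    (hrs : r ≤ s) (hs1 : s < 1) :
    majorantDeriv c k r * (s - r) ≤ majorant c k s - majorant c k r := by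
  have hs : 0 ≤ s := hr.trans hrs
  rw [majorantDeriv, majorant, majorant, ← tsum_mul_right,
    ← (summable_mul_pow hc hS hs hs1.le).tsum_sub (summable_mul_pow hc hS hr (hrs.trans hs1.le))]
  refine ((summable_deriv hc hS hr (hrs.trans_lt hs1)).mul_right _).tsum_le_tsum (fun n => ?_)
    ((summable_mul_pow hc hS hs hs1.le).sub (summable_mul_pow hc hS hr (hrs.trans hs1.le)))
  have := mul_le_mul_of_nonneg_left (natCast_mul_pow_sub_one_mul_sub_le hr hrs (n + k)) (hc n)
  linarith

theorem norm_ofReal_mul_pow_le {a : ℝ} (ha : 0 ≤ a) {z : ℂ} (hz : ‖z‖ ≤ r) (m : ℕ) :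
    ‖(a : ℂ) * z ^ m‖ ≤ a * r ^ m := by
  rw [norm_mul, norm_pow, Complex.norm_of_nonneg ha]
  gcongr

theorem summable_ofReal_mul_pow (hc : ∀ n, 0 ≤ c n) (hS : Summable c) {z : ℂ} (hz : ‖z‖ ≤ r)
    (hr1 : r ≤ 1) : Summable fun n => (c n : ℂ) * z ^ (n + k) :=
  (summable_mul_pow hc hS ((norm_nonneg z).trans hz) hr1).of_norm_bounded
    fun n => norm_ofReal_mul_pow_le (hc n) hz _

theorem norm_tsum_le_majorant (hc : ∀ n, 0 ≤ c n) (hS : Summable c) {z : ℂ} (hz : ‖z‖ ≤ r)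
    (hr1 : r ≤ 1) : ‖∑' n, (c n : ℂ) * z ^ (n + k)‖ ≤ majorant c k r :=
  tsum_of_norm_bounded (summable_mul_pow hc hS ((norm_nonneg z).trans hz) hr1).hasSum
    fun n => norm_ofReal_mul_pow_le (hc n) hz _

theorem norm_tsum_sub_tsum_le (hc : ∀ n, 0 ≤ c n) (hS : Summable c) {z w : ℂ} (hz : ‖z‖ ≤ r)
    (hw : ‖w‖ ≤ r) (hr1 : r < 1) :
    ‖∑' n, (c n : ℂ) * z ^ (n + k) - ∑' n, (c n : ℂ) * w ^ (n + k)‖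
      ≤ majorantDeriv c k r * ‖z - w‖ := by
  rw [← (summable_ofReal_mul_pow hc hS hz hr1.le).tsum_sub
    (summable_ofReal_mul_pow hc hS hw hr1.le), majorantDeriv, ← tsum_mul_right]
  refine tsum_of_norm_bounded ((summable_deriv hc hS ((norm_nonneg z).trans hz) hr1).mul_right
    _).hasSum fun n => ?_
  rw [← mul_sub, norm_mul, Complex.norm_of_nonneg (hc n)]
  have := mul_le_mul_of_nonneg_left (norm_pow_sub_pow_le hz hw (n + k)) (hc n)
  linarith

end ShiftedSeries

theorem exists_isFixedPt_of_dist_le_mul {X : Type*} [MetricSpace X] [CompleteSpace X]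
    {s : Set X} (hs : IsClosed s) {x₀ : X} (hx₀ : x₀ ∈ s) {T : X → X} (hT : Set.MapsTo T s s)
    {K : ℝ} (hK : K < 1) (hlip : ∀ x ∈ s, ∀ y ∈ s, dist (T x) (T y) ≤ K * dist x y) :
    ∃ x ∈ s, Function.IsFixedPt T x := by
  have hlip' : LipschitzOnWith K.toNNReal T s := LipschitzOnWith.of_dist_le_mul fun x hx y hy =>
    (hlip x hx y hy).trans (mul_le_mul_of_nonneg_right (Real.le_coe_toNNReal K) dist_nonneg)
  obtain ⟨x, hxs, hfix, -⟩ := ContractingWith.exists_fixedPoint' hs.isComplete hT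
    ⟨Real.toNNReal_lt_one.2 hK, hT.lipschitzOnWith_iff_restrict.1 hlip'⟩ hx₀ (edist_ne_top _ _)
  exact ⟨x, hxs, hfix⟩

/- Read `1 - K r` as a bound for the slope of `ψ` at `r`: beyond the first point where `K ≥ 1`,
`ψ` cannot increase any more, so slightly before that point `ψ` already exceeds `β`. -/
theorem exists_lt_one_le_of_sub_le_one_sub_mul {ψ K : ℝ → ℝ} {ρ β : ℝ} (hρ : 0 ≤ ρ)
    (hK0 : K 0 < 1) (hK : ∀ r ∈ Set.Icc 0 ρ, 0 ≤ K r)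
    (hψ : ∀ r s, 0 ≤ r → r ≤ s → s ≤ ρ → ψ s - ψ r ≤ (1 - K r) * (s - r))
    (hβ : β < ψ ρ) : ∃ r ∈ Set.Icc 0 ρ, K r < 1 ∧ β ≤ ψ r := by
  by_cases hKρ : K ρ < 1
  · exact ⟨ρ, ⟨hρ, le_rfl⟩, hKρ, hβ.le⟩
  set S := {s ∈ Set.Icc 0 ρ | 1 ≤ K s}
  have hSne : S.Nonempty := ⟨ρ, ⟨hρ, le_rfl⟩, not_lt.1 hKρ⟩
  have hSbdd : BddBelow S := ⟨0, fun s hs => hs.1.1⟩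
  obtain ⟨s, ⟨⟨hs0, hsρ⟩, hKs⟩, hs⟩ :=
    Real.lt_sInf_add_pos hSne (sub_pos.2 hβ)
  set r := max 0 (s - (ψ ρ - β))
  have hr0 : 0 ≤ r := le_max_left _ _
  have hrs : r ≤ s := max_le hs0 (by linarith)
  have hKr : K r < 1 := by
    rcases max_cases 0 (s - (ψ ρ - β)) with ⟨hr, -⟩ | ⟨hr, -⟩
    · rwa [← hr] at hK0
    · by_contra! h
      have : sInf S ≤ r := csInf_le hSbdd ⟨⟨hr0, hrs.trans hsρ⟩, h⟩
      linarith
  have hψs : ψ ρ ≤ ψ s := by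
    have := hψ s ρ hs0 hsρ le_rfl
    nlinarith
  have hψr : ψ s - ψ r ≤ s - r := (hψ r s hr0 hrs hsρ).trans
    (mul_le_of_le_one_left (by linarith) (by linarith [hK r ⟨hr0, hrs.trans hsρ⟩]))
  exact ⟨r, ⟨hr0, hrs.trans hsρ⟩, hKr, by linarith [le_max_right 0 (s - (ψ ρ - β))]⟩

namespace TUH

noncomputable def perturbation (A B : ℕ → ℝ) (z : ℂ) : ℂ :=
  ∑' n, (A (n + 2) : ℂ) * z ^ (n + 2) - starRingEnd ℂ (∑' n, (B (n + 1) : ℂ) * z ^ (n + 1))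

noncomputable def majorant (A B : ℕ → ℝ) (r : ℝ) : ℝ :=
  ShiftedSeries.majorant (fun n => A (n + 2)) 2 r + ShiftedSeries.majorant (fun n => B (n + 1)) 1 r

noncomputable def lipschitzConst (A B : ℕ → ℝ) (r : ℝ) : ℝ :=
  ShiftedSeries.majorantDeriv (fun n => A (n + 2)) 2 r +
    ShiftedSeries.majorantDeriv (fun n => B (n + 1)) 1 r

variable {A B : ℕ → ℝ} {α r : ℝ}

theorem norm_perturbation_le (hA : ∀ n, 0 ≤ A (n + 2)) (hB : ∀ n, 0 ≤ B (n + 1))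
    (hSA : Summable fun n => A (n + 2)) (hSB : Summable fun n => B (n + 1)) {z : ℂ}
    (hz : ‖z‖ ≤ r) (hr1 : r ≤ 1) : ‖perturbation A B z‖ ≤ majorant A B r := by
  refine (norm_sub_le _ _).trans ?_
  rw [Complex.norm_conj]
  exact add_le_add (ShiftedSeries.norm_tsum_le_majorant hA hSA hz hr1)
    (ShiftedSeries.norm_tsum_le_majorant hB hSB hz hr1)

theorem norm_perturbation_sub_le (hA : ∀ n, 0 ≤ A (n + 2)) (hB : ∀ n, 0 ≤ B (n + 1))
    (hSA : Summable fun n => A (n + 2)) (hSB : Summable fun n => B (n + 1)) {z w : ℂ}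
    (hz : ‖z‖ ≤ r) (hw : ‖w‖ ≤ r) (hr1 : r < 1) :
    ‖perturbation A B z - perturbation A B w‖ ≤ lipschitzConst A B r * ‖z - w‖ := by
  rw [perturbation, perturbation, sub_sub_sub_comm, ← map_sub, lipschitzConst, add_mul]
  refine (norm_sub_le _ _).trans ?_
  rw [Complex.norm_conj]
  exact add_le_add (ShiftedSeries.norm_tsum_sub_tsum_le hA hSA hz hw hr1)
    (ShiftedSeries.norm_tsum_sub_tsum_le hB hSB hz hw hr1)

theorem lipschitzConst_mul_sub_le (hA : ∀ n, 0 ≤ A (n + 2)) (hB : ∀ n, 0 ≤ B (n + 1))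
    (hSA : Summable fun n => A (n + 2)) (hSB : Summable fun n => B (n + 1)) {s : ℝ}
    (hr : 0 ≤ r) (hrs : r ≤ s) (hs1 : s < 1) :
    lipschitzConst A B r * (s - r) ≤ majorant A B s - majorant A B r := by
  have hA' := ShiftedSeries.majorantDeriv_mul_sub_le (k := 2) hA hSA hr hrs hs1
  have hB' := ShiftedSeries.majorantDeriv_mul_sub_le (k := 1) hB hSB hr hrs hs1
  rw [lipschitzConst, majorant, majorant]
  linarith

theorem lipschitzConst_nonneg (hA : ∀ n, 0 ≤ A (n + 2)) (hB : ∀ n, 0 ≤ B (n + 1)) (hr : 0 ≤ r) :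
    0 ≤ lipschitzConst A B r :=
  add_nonneg (ShiftedSeries.majorantDeriv_nonneg hA hr) (ShiftedSeries.majorantDeriv_nonneg hB hr)

theorem lipschitzConst_zero : lipschitzConst A B 0 = B 1 := by
  simp only [lipschitzConst, ShiftedSeries.majorantDeriv]
  rw [tsum_eq_single 0 fun n hn => by simp [hn]]
  rw [tsum_eq_single 0 fun n hn => by simp [hn]]
  simp

theorem majorant_le (hA : ∀ n, 0 ≤ A (n + 2)) (hB : ∀ n, 0 ≤ B (n + 1))
    (hSA : Summable fun n => A (n + 2)) (hSB : Summable fun n => B (n + 1)) (hr : 0 ≤ r)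
    (hr1 : r ≤ 1) :
    majorant A B r ≤ B 1 * r + ((∑' n, A (n + 2)) + (∑' n, B (n + 1)) - B 1) * r ^ 2 := by
  have hSB' : Summable fun n => B (n + 1 + 1) := (summable_nat_add_iff 1).2 hSB
  have hAr := ShiftedSeries.majorant_le_tsum_mul_pow (k := 2) hA hSA hr hr1
  have hBr := ShiftedSeries.majorant_le_tsum_mul_pow (k := 2) (fun n => hB (n + 1)) hSB' hr hr1
  rw [majorant, ShiftedSeries.majorant_eq_add hB hSB hr hr1, hSB.tsum_eq_zero_add]
  simp only [zero_add, pow_one] at hBr ⊢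
  linarith

theorem norm_sub_perturbation_bounds (hA : ∀ n, 0 ≤ A (n + 2)) (hB : ∀ n, 0 ≤ B (n + 1))
    (hSA : Summable fun n => A (n + 2)) (hSB : Summable fun n => B (n + 1))
    (hsum : (∑' n : ℕ, A (n + 2)) + (∑' n : ℕ, B (n + 1)) ≤ 1 - α) {z : ℂ} (hz : ‖z‖ ≤ 1) :
    (1 - B 1) * ‖z‖ - (1 - α - B 1) * ‖z‖ ^ 2 ≤ ‖z - perturbation A B z‖ ∧
      ‖z - perturbation A B z‖ ≤ (1 + B 1) * ‖z‖ + (1 - α - B 1) * ‖z‖ ^ 2 := by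
  have hpert := (norm_perturbation_le hA hB hSA hSB le_rfl hz).trans
    (majorant_le hA hB hSA hSB (norm_nonneg z) hz)
  have hcoef : ((∑' n, A (n + 2)) + (∑' n, B (n + 1)) - B 1) * ‖z‖ ^ 2
      ≤ (1 - α - B 1) * ‖z‖ ^ 2 := by gcongr
  exact ⟨by linarith [norm_sub_norm_le z (perturbation A B z)],
    by linarith [norm_sub_le z (perturbation A B z)]⟩

theorem exists_contraction_radius (hA : ∀ n, 0 ≤ A (n + 2)) (hB : ∀ n, 0 ≤ B (n + 1))
    (hSA : Summable fun n => A (n + 2)) (hSB : Summable fun n => B (n + 1))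
    (hsum : (∑' n : ℕ, A (n + 2)) + (∑' n : ℕ, B (n + 1)) ≤ 1 - α) {β : ℝ} (hβ0 : 0 ≤ β)
    (hβ : β < α) :
    ∃ r, 0 ≤ r ∧ r < 1 ∧ lipschitzConst A B r < 1 ∧ β + majorant A B r ≤ r := by
  have hα : 0 < α := hβ0.trans_lt hβ
  obtain ⟨ρ, hβρ, hρ1⟩ := exists_between ((div_lt_one hα).2 hβ)
  have hρ0 : 0 ≤ ρ := (div_nonneg hβ0 hα.le).trans hβρ.le
  rw [div_lt_iff₀' hα] at hβρ
  have hB1 : B 1 ≤ ∑' n, B (n + 1) := hSB.le_tsum 0 fun n _ => hB n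
  have hA0 : 0 ≤ ∑' n, A (n + 2) := tsum_nonneg hA
  have hmajρ : majorant A B ρ ≤ (1 - α) * ρ := by
    have h := majorant_le hA hB hSA hSB hρ0 hρ1.le
    have : ((∑' n, A (n + 2)) + (∑' n, B (n + 1)) - B 1) * ρ ^ 2 ≤ (1 - α - B 1) * ρ :=
      mul_le_mul (by linarith) (pow_le_of_le_one hρ0 hρ1.le two_ne_zero) (sq_nonneg ρ) (by linarith)
    linarith
  obtain ⟨r, ⟨hr0, hrρ⟩, hKr, hψr⟩ :=
    exists_lt_one_le_of_sub_le_one_sub_mul (ψ := fun r => r - majorant A B r)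
      (K := lipschitzConst A B) hρ0 (by rw [lipschitzConst_zero]; linarith)
      (fun r hr => lipschitzConst_nonneg hA hB hr.1)
      (fun r s hr hrs hsρ => by
        have := lipschitzConst_mul_sub_le hA hB hSA hSB hr hrs (hsρ.trans_lt hρ1)
        linarith)
      (show β < ρ - majorant A B ρ by linarith)
  exact ⟨r, hr0, hrρ.trans_lt hρ1, hKr, by linarith⟩

theorem exists_sub_perturbation_eq (hA : ∀ n, 0 ≤ A (n + 2)) (hB : ∀ n, 0 ≤ B (n + 1))
    (hSA : Summable fun n => A (n + 2)) (hSB : Summable fun n => B (n + 1))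
    (hsum : (∑' n : ℕ, A (n + 2)) + (∑' n : ℕ, B (n + 1)) ≤ 1 - α) {w : ℂ} (hw : ‖w‖ < α) :
    ∃ z : ℂ, ‖z‖ < 1 ∧ z - perturbation A B z = w := by
  obtain ⟨r, hr0, hr1, hK, hwr⟩ := exists_contraction_radius hA hB hSA hSB hsum (norm_nonneg w) hw
  have hmaps : Set.MapsTo (fun z => w + perturbation A B z) (Metric.closedBall 0 r)
      (Metric.closedBall 0 r) := fun z hz => by
    rw [mem_closedBall_zero_iff] at hz ⊢
    linarith [norm_add_le w (perturbation A B z), norm_perturbation_le hA hB hSA hSB hz hr1.le]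
  obtain ⟨z, hz, hfix⟩ := exists_isFixedPt_of_dist_le_mul Metric.isClosed_closedBall
    (Metric.mem_closedBall_self hr0) hmaps hK fun x hx y hy => by
      rw [dist_eq_norm, dist_eq_norm, add_sub_add_left_eq_sub]
      exact norm_perturbation_sub_le hA hB hSA hSB (mem_closedBall_zero_iff.1 hx)
        (mem_closedBall_zero_iff.1 hy) hr1
  exact ⟨z, (mem_closedBall_zero_iff.1 hz).trans_lt hr1, (eq_sub_of_add_eq hfix.eq).symm⟩

end TUH

theorem TUH_growth_and_covering_general
    (α : ℝ)
    (A B : ℕ → ℝ)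
    (hA : ∀ n, 2 ≤ n → 0 ≤ A n) (hB : ∀ n, 1 ≤ n → 0 ≤ B n)
    (hSA : Summable fun n : ℕ => A (n + 2))
    (hSB : Summable fun n : ℕ => B (n + 1))
    (hsum : (∑' n : ℕ, A (n + 2)) + (∑' n : ℕ, B (n + 1)) ≤ 1 - α) :
    (∀ z : ℂ, ‖z‖ < 1 →
      (1 - B 1) * ‖z‖ - (1 - α - B 1) * ‖z‖ ^ 2
        ≤ ‖(z - ∑' n : ℕ, (A (n + 2) : ℂ) * z ^ (n + 2)
            + starRingEnd ℂ (∑' n : ℕ, (B (n + 1) : ℂ) * z ^ (n + 1)))‖ ∧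
      ‖(z - ∑' n : ℕ, (A (n + 2) : ℂ) * z ^ (n + 2)
            + starRingEnd ℂ (∑' n : ℕ, (B (n + 1) : ℂ) * z ^ (n + 1)))‖
        ≤ (1 + B 1) * ‖z‖ + (1 - α - B 1) * ‖z‖ ^ 2) ∧
    (∀ w : ℂ, ‖w‖ < α → ∃ z : ℂ, ‖z‖ < 1 ∧
      (z - ∑' n : ℕ, (A (n + 2) : ℂ) * z ^ (n + 2)
        + starRingEnd ℂ (∑' n : ℕ, (B (n + 1) : ℂ) * z ^ (n + 1))) = w) := by
  have hA' : ∀ n, 0 ≤ A (n + 2) := fun n => hA _ (by omega)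
  have hB' : ∀ n, 0 ≤ B (n + 1) := fun n => hB _ (by omega)
  have hf : ∀ z : ℂ, z - ∑' n : ℕ, (A (n + 2) : ℂ) * z ^ (n + 2)
      + starRingEnd ℂ (∑' n : ℕ, (B (n + 1) : ℂ) * z ^ (n + 1)) = z - TUH.perturbation A B z :=
    fun z => by rw [TUH.perturbation]; ring
  simp only [hf]
  exact ⟨fun z hz => TUH.norm_sub_perturbation_bounds hA' hB' hSA hSB hsum hz.le,
    fun w hw => TUH.exists_sub_perturbation_eq hA' hB' hSA hSB hsum hw⟩

/-- Growth and covering for `TU_H(α)`: if `Σ_{n≥2} A_n + Σ_{n≥1} B_n ≤ 1 - α`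
(`A_n, B_n ≥ 0`), then `(1-B₁)|z| - (1-α-B₁)|z|² ≤ |f(z)| ≤ (1+B₁)|z| + (1-α-B₁)|z|²`
on the unit disk, and `f(D)` contains the disk `{|w| < α}`. -/
theorem TUH_growth_and_covering
    (α : ℝ) (hα : 0 ≤ α) (hα1 : α < 1)
    (A B : ℕ → ℝ)
    (hA : ∀ n, 2 ≤ n → 0 ≤ A n) (hB : ∀ n, 1 ≤ n → 0 ≤ B n)
    (hSA : Summable fun n : ℕ => A (n + 2))
    (hSB : Summable fun n : ℕ => B (n + 1))
    (hsum : (∑' n : ℕ, A (n + 2)) + (∑' n : ℕ, B (n + 1)) ≤ 1 - α) :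
    (∀ z : ℂ, ‖z‖ < 1 →
      (1 - B 1) * ‖z‖ - (1 - α - B 1) * ‖z‖ ^ 2
        ≤ ‖(z - ∑' n : ℕ, (A (n + 2) : ℂ) * z ^ (n + 2)
            + starRingEnd ℂ (∑' n : ℕ, (B (n + 1) : ℂ) * z ^ (n + 1)))‖ ∧
      ‖(z - ∑' n : ℕ, (A (n + 2) : ℂ) * z ^ (n + 2)
            + starRingEnd ℂ (∑' n : ℕ, (B (n + 1) : ℂ) * z ^ (n + 1)))‖
        ≤ (1 + B 1) * ‖z‖ + (1 - α - B 1) * ‖z‖ ^ 2) ∧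
    (∀ w : ℂ, ‖w‖ < α → ∃ z : ℂ, ‖z‖ < 1 ∧
      (z - ∑' n : ℕ, (A (n + 2) : ℂ) * z ^ (n + 2)
        + starRingEnd ℂ (∑' n : ℕ, (B (n + 1) : ℂ) * z ^ (n + 1))) = w) :=
  TUH_growth_and_covering_general α A B hA hB hSA hSB hsum
end

section
/- For 0 ≤ α < 1 and 0 ≤ β < 1, if f ∈ TU_H(α) and F ∈ TU_H(β), then f∗̂F ∈ TU_H(1 - (1-α)(1-β)). Equivalently, if Σ_{n≥2}A_n + Σ_{n≥1}B_n ≤ 1-α and Σ_{n≥2}A'_n + Σ_{n≥1}B'_n ≤ 1-β with all coefficients nonnegative, then Σ_{n≥2}A_nA'_n + Σ_{n≥1}B_nB'_n ≤ (1-α)(1-β). -/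
/-- `TU_H(α) ∗̂ TU_H(β) ⊂ TU_H(1 - (1-α)(1-β))`: if `Σ A_n + Σ B_n ≤ 1-α` and
`Σ A'_n + Σ B'_n ≤ 1-β` (nonnegative coefficients), then
`Σ A_n A'_n + Σ B_n B'_n ≤ (1-α)(1-β) = 1 - (1 - (1-α)(1-β))`. -/
theorem TUH_closed_under_hat_product
    (α β : ℝ) (hα : 0 ≤ α) (hα1 : α < 1) (hβ : 0 ≤ β) (hβ1 : β < 1)
    (A B A' B' : ℕ → ℝ)
    (hA : ∀ n, 2 ≤ n → 0 ≤ A n) (hB : ∀ n, 1 ≤ n → 0 ≤ B n)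
    (hA' : ∀ n, 2 ≤ n → 0 ≤ A' n) (hB' : ∀ n, 1 ≤ n → 0 ≤ B' n)
    (hSA : Summable fun n : ℕ => A (n + 2)) (hSB : Summable fun n : ℕ => B (n + 1))
    (hSA' : Summable fun n : ℕ => A' (n + 2)) (hSB' : Summable fun n : ℕ => B' (n + 1))
    (hsum : (∑' n : ℕ, A (n + 2)) + (∑' n : ℕ, B (n + 1)) ≤ 1 - α)
    (hsum' : (∑' n : ℕ, A' (n + 2)) + (∑' n : ℕ, B' (n + 1)) ≤ 1 - β) :
    (Summable fun n : ℕ => A (n + 2) * A' (n + 2)) ∧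
    (Summable fun n : ℕ => B (n + 1) * B' (n + 1)) ∧
    (∑' n : ℕ, A (n + 2) * A' (n + 2)) + (∑' n : ℕ, B (n + 1) * B' (n + 1))
      ≤ 1 - (1 - (1 - α) * (1 - β)) := by
  have hA2 : ∀ n : ℕ, 0 ≤ A (n + 2) := fun n => hA _ (by omega)
  have hB1 : ∀ n : ℕ, 0 ≤ B (n + 1) := fun n => hB _ (by omega)
  have hA2' : ∀ n : ℕ, 0 ≤ A' (n + 2) := fun n => hA' _ (by omega)
  have hB1' : ∀ n : ℕ, 0 ≤ B' (n + 1) := fun n => hB' _ (by omega)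
  have hTA' : 0 ≤ ∑' n : ℕ, A' (n + 2) := tsum_nonneg hA2'
  have hTB' : 0 ≤ ∑' n : ℕ, B' (n + 1) := tsum_nonneg hB1'
  have hA'le : ∀ n : ℕ, A' (n + 2) ≤ 1 - β := fun n =>
    le_trans (Summable.le_tsum hSA' n (fun m _ => hA2' m)) (by linarith)
  have hB'le : ∀ n : ℕ, B' (n + 1) ≤ 1 - β := fun n =>
    le_trans (Summable.le_tsum hSB' n (fun m _ => hB1' m)) (by linarith)
  have hSAA : Summable fun n : ℕ => A (n + 2) * A' (n + 2) := by
    apply Summable.of_nonneg_of_le (fun n => mul_nonneg (hA2 n) (hA2' n))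
      (fun n => ?_) (hSA.mul_right (1 - β))
    exact mul_le_mul_of_nonneg_left (hA'le n) (hA2 n)
  have hSBB : Summable fun n : ℕ => B (n + 1) * B' (n + 1) := by
    apply Summable.of_nonneg_of_le (fun n => mul_nonneg (hB1 n) (hB1' n))
      (fun n => ?_) (hSB.mul_right (1 - β))
    exact mul_le_mul_of_nonneg_left (hB'le n) (hB1 n)
  refine ⟨hSAA, hSBB, ?_⟩
  have h1 : (∑' n : ℕ, A (n + 2) * A' (n + 2)) ≤ (∑' n : ℕ, A (n + 2)) * (1 - β) := by
    rw [← tsum_mul_right]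
    exact Summable.tsum_le_tsum (fun n => mul_le_mul_of_nonneg_left (hA'le n) (hA2 n)) hSAA
      (hSA.mul_right _)
  have h2 : (∑' n : ℕ, B (n + 1) * B' (n + 1)) ≤ (∑' n : ℕ, B (n + 1)) * (1 - β) := by
    rw [← tsum_mul_right]
    exact Summable.tsum_le_tsum (fun n => mul_le_mul_of_nonneg_left (hB'le n) (hB1 n)) hSBB
      (hSB.mul_right _)
  have h3 : (∑' n : ℕ, A (n + 2)) * (1 - β) + (∑' n : ℕ, B (n + 1)) * (1 - β)
      ≤ (1 - α) * (1 - β) := by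
    rw [← add_mul]
    exact mul_le_mul_of_nonneg_right hsum (by linarith)
  linarith
end

section
/- Let 0 ≤ α < 1 and f(z) = z - Σ_{n≥2}A_n z^n + conj(Σ_{n≥2}B_n z^n) with A_n,B_n ≥ 0 (note B_1 = 0). If Σ_{n≥2}(n-α)(A_n + B_n) ≤ 1-α (i.e., f ∈ TS*^0_H(α)), then Σ_{n≥2}(A_n + B_n) ≤ (1-α)/(2-α); consequently Re(f(z)/z) > 1/(2-α) for all z ≠ 0 in the unit disk, i.e., TS*^0_H(α) ⊂ TU^0_H(1/(2-α)). -/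
open Complex

/-
Since `n - α ≥ 2 - α` for `n ≥ 2`, the hypothesis gives `(2 - α) Σ (A_n + B_n) ≤ 1 - α`.
Writing `f(z)/z = 1 + (conj(Σ B_n z^n) - Σ A_n z^n)/z` and using `|z^n| ≤ |z|^2` for `n ≥ 2`,
the perturbation has modulus at most `|z| Σ (A_n + B_n) < (1 - α)/(2 - α)`, so
`Re(f(z)/z) > 1 - (1 - α)/(2 - α) = 1/(2 - α)`.
-/

lemma summable_and_mul_tsum_le_of_le_weight {c w : ℕ → ℝ} {m : ℝ} (hm : 0 < m)
    (hc : ∀ n, 0 ≤ c n) (hw : ∀ n, m ≤ w n) (hwc : Summable fun n => w n * c n) :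
    Summable c ∧ m * ∑' n, c n ≤ ∑' n, w n * c n := by
  have hle : ∀ n, m * c n ≤ w n * c n := fun n => mul_le_mul_of_nonneg_right (hw n) (hc n)
  have hmc : Summable fun n => m * c n :=
    .of_nonneg_of_le (fun n => mul_nonneg hm.le (hc n)) hle hwc
  refine ⟨(summable_mul_left_iff hm.ne').mp hmc, ?_⟩
  rw [← tsum_mul_left]
  exact hmc.tsum_le_tsum hle hwc

lemma norm_tsum_mul_pow_add_le {c : ℕ → ℝ} (hc : ∀ n, 0 ≤ c n) (hcs : Summable c)
    {z : ℂ} (hz : ‖z‖ ≤ 1) (k : ℕ) :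
    ‖∑' n, (c n : ℂ) * z ^ (n + k)‖ ≤ ‖z‖ ^ k * ∑' n, c n := by
  have hterm : ∀ n, ‖(c n : ℂ) * z ^ (n + k)‖ ≤ ‖z‖ ^ k * c n := fun n => by
    rw [norm_mul, norm_pow, norm_real, Real.norm_of_nonneg (hc n), mul_comm]
    exact mul_le_mul_of_nonneg_right
      (pow_le_pow_of_le_one (norm_nonneg z) hz (Nat.le_add_left k n)) (hc n)
  have hnorms : Summable fun n => ‖(c n : ℂ) * z ^ (n + k)‖ :=
    .of_nonneg_of_le (fun _ => norm_nonneg _) hterm (hcs.mul_left _)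
  calc ‖∑' n, (c n : ℂ) * z ^ (n + k)‖ ≤ ∑' n, ‖(c n : ℂ) * z ^ (n + k)‖ :=
        norm_tsum_le_tsum_norm hnorms
    _ ≤ ∑' n, ‖z‖ ^ k * c n := hnorms.tsum_le_tsum hterm (hcs.mul_left _)
    _ = ‖z‖ ^ k * ∑' n, c n := tsum_mul_left

lemma one_sub_norm_mul_tsum_le_re_div {a b : ℕ → ℝ} (ha : ∀ n, 0 ≤ a n) (hb : ∀ n, 0 ≤ b n)
    (hab : Summable fun n => a n + b n) {z : ℂ} (hz : ‖z‖ ≤ 1) (hz0 : z ≠ 0) :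
    1 - ‖z‖ * ∑' n, (a n + b n) ≤
      ((z - ∑' n, (a n : ℂ) * z ^ (n + 2) + starRingEnd ℂ (∑' n, (b n : ℂ) * z ^ (n + 2))) / z).re := by
  have has : Summable a := .of_nonneg_of_le ha (fun n => le_add_of_nonneg_right (hb n)) hab
  have hbs : Summable b := .of_nonneg_of_le hb (fun n => le_add_of_nonneg_left (ha n)) hab
  set P := ∑' n, (a n : ℂ) * z ^ (n + 2)
  set Q := ∑' n, (b n : ℂ) * z ^ (n + 2)
  have hsplit : (z - P + starRingEnd ℂ Q) / z = 1 + (starRingEnd ℂ Q - P) / z := by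
    field_simp
    ring
  have hperturb : ‖(starRingEnd ℂ Q - P) / z‖ ≤ ‖z‖ * ∑' n, (a n + b n) := by
    rw [norm_div, div_le_iff₀ (norm_pos_iff.mpr hz0), has.tsum_add hbs]
    calc ‖starRingEnd ℂ Q - P‖ ≤ ‖Q‖ + ‖P‖ := by
          simpa only [norm_conj] using norm_sub_le (starRingEnd ℂ Q) P
      _ ≤ ‖z‖ ^ 2 * ∑' n, b n + ‖z‖ ^ 2 * ∑' n, a n :=
          add_le_add (norm_tsum_mul_pow_add_le hb hbs hz 2) (norm_tsum_mul_pow_add_le ha has hz 2)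
      _ = ‖z‖ * (∑' n, a n + ∑' n, b n) * ‖z‖ := by ring
  rw [hsplit, add_re, one_re]
  linarith [neg_abs_le ((starRingEnd ℂ Q - P) / z).re, abs_re_le_norm ((starRingEnd ℂ Q - P) / z)]

theorem TSstar_subset_TUH_general
    (α : ℝ) (hα1 : α < 1)
    (A B : ℕ → ℝ)
    (hA : ∀ n, 2 ≤ n → 0 ≤ A n) (hB : ∀ n, 2 ≤ n → 0 ≤ B n)
    (hS : Summable fun n : ℕ => (((n : ℝ) + 2) - α) * (A (n + 2) + B (n + 2)))
    (hsum : (∑' n : ℕ, (((n : ℝ) + 2) - α) * (A (n + 2) + B (n + 2))) ≤ 1 - α) :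
    (Summable fun n : ℕ => A (n + 2) + B (n + 2)) ∧
    (∑' n : ℕ, (A (n + 2) + B (n + 2))) ≤ (1 - α) / (2 - α) ∧
    (∀ z : ℂ, ‖z‖ < 1 → z ≠ 0 →
      1 / (2 - α) < (((z - ∑' n : ℕ, (A (n + 2) : ℂ) * z ^ (n + 2)
          + starRingEnd ℂ (∑' n : ℕ, (B (n + 2) : ℂ) * z ^ (n + 2))) / z).re)) := by
  have h2α : 0 < 2 - α := by linarith
  have hA' : ∀ n : ℕ, 0 ≤ A (n + 2) := fun n => hA _ (by omega)
  have hB' : ∀ n : ℕ, 0 ≤ B (n + 2) := fun n => hB _ (by omega)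
  obtain ⟨hABs, hweighted⟩ := summable_and_mul_tsum_le_of_le_weight h2α
    (fun n => add_nonneg (hA' n) (hB' n)) (fun n => by simp) hS
  have hbound : ∑' n, (A (n + 2) + B (n + 2)) ≤ (1 - α) / (2 - α) := by
    rw [le_div_iff₀ h2α, mul_comm]
    exact hweighted.trans hsum
  refine ⟨hABs, hbound, fun z hz hz0 => ?_⟩
  calc 1 / (2 - α) = 1 - (1 - α) / (2 - α) := by field_simp; ring
    _ < 1 - ‖z‖ * ∑' n, (A (n + 2) + B (n + 2)) := by
        have hpos : 0 < (1 - α) / (2 - α) := div_pos (by linarith) h2α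
        nlinarith [norm_nonneg z]
    _ ≤ _ := one_sub_norm_mul_tsum_le_re_div hA' hB' hABs hz.le hz0

/-- `TS*^0_H(α) ⊂ TU^0_H(1/(2-α))`: if `Σ_{n≥2} (n-α)(A_n + B_n) ≤ 1-α`
(nonnegative coefficients, `B₁ = 0`), then `Σ_{n≥2} (A_n + B_n) ≤ (1-α)/(2-α)`,
and consequently `Re(f(z)/z) > 1/(2-α)` on the punctured unit disk for
`f(z) = z - Σ_{n≥2} A_n z^n + conj(Σ_{n≥2} B_n z^n)`. -/
theorem TSstar_subset_TUH
    (α : ℝ) (hα : 0 ≤ α) (hα1 : α < 1)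
    (A B : ℕ → ℝ)
    (hA : ∀ n, 2 ≤ n → 0 ≤ A n) (hB : ∀ n, 2 ≤ n → 0 ≤ B n)
    (hS : Summable fun n : ℕ => (((n : ℝ) + 2) - α) * (A (n + 2) + B (n + 2)))
    (hsum : (∑' n : ℕ, (((n : ℝ) + 2) - α) * (A (n + 2) + B (n + 2))) ≤ 1 - α) :
    (Summable fun n : ℕ => A (n + 2) + B (n + 2)) ∧
    (∑' n : ℕ, (A (n + 2) + B (n + 2))) ≤ (1 - α) / (2 - α) ∧
    (∀ z : ℂ, ‖z‖ < 1 → z ≠ 0 →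
      1 / (2 - α) < (((z - ∑' n : ℕ, (A (n + 2) : ℂ) * z ^ (n + 2)
          + starRingEnd ℂ (∑' n : ℕ, (B (n + 2) : ℂ) * z ^ (n + 2))) / z).re)) :=
  TSstar_subset_TUH_general α hα1 A B hA hB hS hsum
end

section
/- Let 0 ≤ α < 1 and f(z) = z - Σ_{n≥2}A_n z^n + conj(Σ_{n≥2}B_n z^n) with A_n,B_n ≥ 0. If Σ_{n≥2}n(n-α)(A_n + B_n) ≤ 1-α (i.e., f ∈ TK^0_H(α)), then Σ_{n≥2}n(A_n + B_n) ≤ (1-α)/(2-α), and hence Σ_{n≥2}(A_n+B_n) ≤ (1-α)/(2(2-α)), i.e., TK^0_H(α) ⊂ TU^0_H((3-α)/(2(2-α))). -/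
/-- `TK^0_H(α) ⊂ TU^0_H((3-α)/(2(2-α)))`: if `Σ_{n≥2} n(n-α)(A_n + B_n) ≤ 1-α`
(nonnegative coefficients, `B₁ = 0`), then `Σ_{n≥2} n(A_n + B_n) ≤ (1-α)/(2-α)`
and hence `Σ_{n≥2} (A_n + B_n) ≤ (1-α)/(2(2-α)) = 1 - (3-α)/(2(2-α))`. -/
theorem TK_subset_TUH
    (α : ℝ) (hα : 0 ≤ α) (hα1 : α < 1)
    (A B : ℕ → ℝ)
    (hA : ∀ n, 2 ≤ n → 0 ≤ A n) (hB : ∀ n, 2 ≤ n → 0 ≤ B n)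
    (hS : Summable fun n : ℕ => ((n : ℝ) + 2) * (((n : ℝ) + 2) - α) * (A (n + 2) + B (n + 2)))
    (hsum : (∑' n : ℕ, ((n : ℝ) + 2) * (((n : ℝ) + 2) - α) * (A (n + 2) + B (n + 2))) ≤ 1 - α) :
    (Summable fun n : ℕ => ((n : ℝ) + 2) * (A (n + 2) + B (n + 2))) ∧
    (∑' n : ℕ, ((n : ℝ) + 2) * (A (n + 2) + B (n + 2))) ≤ (1 - α) / (2 - α) ∧
    (Summable fun n : ℕ => A (n + 2) + B (n + 2)) ∧
    (∑' n : ℕ, (A (n + 2) + B (n + 2))) ≤ (1 - α) / (2 * (2 - α)) := by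
  have h2α : (0:ℝ) < 2 - α := by linarith
  have hab : ∀ n : ℕ, 0 ≤ A (n + 2) + B (n + 2) := fun n => by
    have := hA (n + 2) (by omega); have := hB (n + 2) (by omega); linarith
  set g := fun n : ℕ => ((n : ℝ) + 2) * (((n : ℝ) + 2) - α) * (A (n + 2) + B (n + 2)) with hg
  set f := fun n : ℕ => ((n : ℝ) + 2) * (A (n + 2) + B (n + 2)) with hf
  set h := fun n : ℕ => A (n + 2) + B (n + 2) with hh
  have hfg : ∀ n, (2 - α) * f n ≤ g n := fun n => by
    have hn : (2:ℝ) ≤ (n:ℝ) + 2 := by linarith [Nat.cast_nonneg (α := ℝ) n]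
    have : (2 - α) * ((n : ℝ) + 2) ≤ ((n : ℝ) + 2) * (((n : ℝ) + 2) - α) := by nlinarith
    have := mul_le_mul_of_nonneg_right this (hab n)
    simpa [hf, hg, mul_assoc] using this
  have hfnn : ∀ n, 0 ≤ f n := fun n => mul_nonneg (by positivity) (hab n)
  have hhf : ∀ n, 2 * h n ≤ f n := fun n => by
    have hn : (2:ℝ) ≤ (n:ℝ) + 2 := by linarith [Nat.cast_nonneg (α := ℝ) n]
    have := mul_le_mul_of_nonneg_right hn (hab n)
    simpa [hf, hh] using this
  have hhnn : ∀ n, 0 ≤ h n := hab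
  have hSf : Summable f := by
    have : Summable fun n => (2 - α)⁻¹ * g n := hS.mul_left _
    refine this.of_nonneg_of_le hfnn (fun n => ?_)
    rw [inv_mul_eq_div, le_div_iff₀ h2α, mul_comm]
    exact hfg n
  have hSh : Summable h := by
    refine (hSf.mul_left (2⁻¹)).of_nonneg_of_le hhnn (fun n => ?_)
    rw [inv_mul_eq_div, le_div_iff₀ (by norm_num : (0:ℝ) < 2), mul_comm]
    exact hhf n
  have htf : ∑' n, f n ≤ (1 - α) / (2 - α) := by
    rw [le_div_iff₀ h2α]
    calc (∑' n, f n) * (2 - α) = ∑' n, (2 - α) * f n := by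
          rw [← tsum_mul_right]; simp [mul_comm]
      _ ≤ ∑' n, g n := Summable.tsum_le_tsum hfg (hSf.mul_left _) hS
      _ ≤ 1 - α := hsum
  have hth : ∑' n, h n ≤ (1 - α) / (2 * (2 - α)) := by
    have h22 : (0:ℝ) < 2 * (2 - α) := by positivity
    rw [le_div_iff₀ h22]
    calc (∑' n, h n) * (2 * (2 - α)) = (∑' n, 2 * h n) * (2 - α) := by
          rw [tsum_mul_left]; ring
      _ ≤ (∑' n, f n) * (2 - α) :=
          mul_le_mul_of_nonneg_right (Summable.tsum_le_tsum hhf (hSh.mul_left _) hSf) h2α.le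
      _ ≤ 1 - α := (le_div_iff₀ h2α).mp htf
  exact ⟨hSf, htf, hSh, hth⟩
end
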